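/- arXiv:2402.05289 — 2 statements merged into one kernel-verified Lean document; each statement's English description precedes it below -/
import Mathlib

section
/- Let G = GLS(A,k,B) be the GLS block graph built from positive integers n ≥ 1, k with 1 ≤ k ≤ n, B, and A = (a_1, …, a_n) with 1 ≤ a_i ≤ B and a_1 + ⋯ + a_n = kB, with universal vertices y_0, y_1, …, y_n, and let H be the graph obtained from G by adding all edges among y_0, y_1, …, y_n (so that these vertices form a clique). If (V_1, …, V_{n+2}) is a proper (n+2)-coloring of H that maximizes the product |V_1|·|V_2|·…·|V_{n+2}| over all proper (n+2)-colorings of H, then ||V_i| − |V_j|| ≤ 2 for all i, j ∈ {1, …, n+2}. -/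
open scoped BigOperators

namespace BlockGraphPaper

variable {V : Type*}

/-- `S` is an independent set of the graph `G`. -/
def IsIndepSet (G : SimpleGraph V) (S : Set V) : Prop :=
  S.Pairwise fun u v => ¬ G.Adj u v

/-- The independence number `α(G)`: the largest size of an independent set. -/
noncomputable def alpha (G : SimpleGraph V) : ℕ :=
  sSup {n | ∃ S : Set V, IsIndepSet G S ∧ S.ncard = n}

/-- `α(G,v)`: the largest size of an independent set containing the vertex `v`. -/
noncomputable def alphaAt (G : SimpleGraph V) (v : V) : ℕ :=
  sSup {n | ∃ S : Set V, IsIndepSet G S ∧ v ∈ S ∧ S.ncard = n}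

/-- `α_min(G) = min over vertices v of α(G,v)`. -/
noncomputable def alphaMin (G : SimpleGraph V) : ℕ :=
  ⨅ v : V, alphaAt G v

/-- The clique number `ω(G)`: the largest size of a clique. -/
noncomputable def cliqueNum (G : SimpleGraph V) : ℕ :=
  sSup {n | ∃ S : Set V, G.IsClique S ∧ S.ncard = n}

/-- A set of vertices is 2-connected if it has at least 3 vertices, induces a
connected subgraph, and removal of any of its vertices keeps it connected
(i.e. it has no cut vertex). -/
def IsTwoConnectedSet (G : SimpleGraph V) (S : Set V) : Prop :=
  3 ≤ S.ncard ∧ (G.induce S).Connected ∧ ∀ v ∈ S, (G.induce (S \ {v})).Connected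

/-- A block graph: every block (maximal 2-connected subgraph) is a clique;
equivalently, every 2-connected set of vertices is a clique. -/
def IsBlockGraph (G : SimpleGraph V) : Prop :=
  ∀ S : Set V, IsTwoConnectedSet G S → G.IsClique S

/-- A vertex is simplicial if its neighborhood is a clique. -/
def IsSimplicial (G : SimpleGraph V) (w : V) : Prop :=
  G.IsClique (G.neighborSet w)

/-- A vertex is a cut vertex if its removal increases the number of
connected components. -/
def IsCutVertex (G : SimpleGraph V) (v : V) : Prop :=
  Nat.card G.ConnectedComponent < Nat.card (G.induce ({v}ᶜ : Set V)).ConnectedComponent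

/-- A cluster graph: a disjoint union of complete graphs, i.e. every
connected component is a clique. -/
def IsClusterGraph (G : SimpleGraph V) : Prop :=
  ∀ u v : V, G.Reachable u v → u = v ∨ G.Adj u v

/-- The distance to cluster `dc(G)`: the least number of vertices whose removal
yields a cluster graph. -/
noncomputable def dc (G : SimpleGraph V) : ℕ :=
  sInf {n | ∃ D : Set V, D.ncard = n ∧ IsClusterGraph (G.induce (Dᶜ : Set V))}

/-- A proper coloring of `G` with colors in `Fin k`. -/
def IsProperColoring (G : SimpleGraph V) {k : ℕ} (c : V → Fin k) : Prop :=
  ∀ u v : V, G.Adj u v → c u ≠ c v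

/-- An equitable `k`-coloring: a proper coloring whose color classes differ
in size by at most one. -/
def IsEquitableColoring (G : SimpleGraph V) {k : ℕ} (c : V → Fin k) : Prop :=
  IsProperColoring G c ∧
    ∀ i j : Fin k, {v | c v = i}.ncard ≤ {v | c v = j}.ncard + 1

/-- The equitable chromatic number `χ₌(G)`: the least `k` admitting an
equitable `k`-coloring. -/
noncomputable def eqChromNum (G : SimpleGraph V) : ℕ :=
  sInf {k : ℕ | ∃ c : V → Fin k, IsEquitableColoring G c}

/-- A maximal clique of a graph. -/
def IsMaximalClique (G : SimpleGraph V) (Q : Set V) : Prop :=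
  G.IsClique Q ∧ ∀ R : Set V, G.IsClique R → Q ⊆ R → Q = R

/-- A pendant clique of a block graph: a maximal clique containing exactly one
cut vertex. -/
def IsPendantClique (G : SimpleGraph V) (Q : Set V) : Prop :=
  IsMaximalClique G Q ∧ ∃! y, y ∈ Q ∧ IsCutVertex G y

/-- The closed neighborhood `N[x]` of a vertex. -/
def closedNbhd (G : SimpleGraph V) (x : V) : Set V :=
  insert x (G.neighborSet x)

/-- An AIS vertex: a vertex belonging to every maximum independent set. -/
def IsAIS (G : SimpleGraph V) (w : V) : Prop :=
  ∀ S : Set V, IsIndepSet G S → S.ncard = alpha G → w ∈ S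

/-- A graph is a disjoint union of stars if every connected component has a
vertex adjacent to all other vertices of the component. -/
def IsDisjointUnionOfStars (G : SimpleGraph V) : Prop :=
  ∀ comp : G.ConnectedComponent, ∃ u : V, G.connectedComponentMk u = comp ∧
    ∀ w : V, G.connectedComponentMk w = comp → w ≠ u → G.Adj u w

/-- The parameter sequence of a GLS block graph: flower `0` has parameter `B`
and flower `i+1` has parameter `a i`. -/
def glsPar (n B : ℕ) (a : Fin n → ℕ) : Fin (n + 1) → ℕ :=
  Fin.cases B a

/-- The vertex set of the GLS block graph `GLS(A,k,B)`: for each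
`i : Fin (n+1)`, the flower `F(par i, k+1)` consists of a universal vertex
(`none`) together with `par i + 1` disjoint copies of `K_k`
(vertex `some (c, p)` is vertex `p` of copy `c`). -/
abbrev GLSV (n k B : ℕ) (a : Fin n → ℕ) : Type :=
  Σ i : Fin (n + 1), Option (Fin (glsPar n B a i + 1) × Fin k)

/-- The GLS block graph `GLS(A,k,B)`: inside each flower the universal vertex
`⟨i, none⟩ = y_i` is joined to all other vertices of the flower and two
non-universal vertices are adjacent iff they lie in the same copy of `K_k`;
moreover `y_0` is joined to each `y_j`, `j = 1, …, n`. -/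
def GLSGraph (n k B : ℕ) (a : Fin n → ℕ) : SimpleGraph (GLSV n k B a) :=
  SimpleGraph.fromRel (fun u v =>
    (u.1 = v.1 ∧ (u.2 = none ∨ v.2 = none ∨
      ∃ c : ℕ, u.2.map (fun p => (p.1 : ℕ)) = some c ∧
               v.2.map (fun p => (p.1 : ℕ)) = some c)) ∨
    (u.2 = none ∧ v.2 = none ∧ (u.1 = 0 ∨ v.1 = 0)))

/-- The universal vertex `y_i` of the `i`-th flower of a GLS block graph. -/
def glsY (n k B : ℕ) (a : Fin n → ℕ) (i : Fin (n + 1)) : GLSV n k B a :=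
  ⟨i, none⟩

/-- The graph `H` obtained from the GLS block graph by joining all the
universal vertices `y_0, y_1, …, y_n` into a clique. -/
def GLSPlus (n k B : ℕ) (a : Fin n → ℕ) : SimpleGraph (GLSV n k B a) :=
  GLSGraph n k B a ⊔ SimpleGraph.fromRel (fun u v => u.2 = none ∧ v.2 = none)


open Finset

section AuxGeneric
variable {W : Type*} [Fintype W] [DecidableEq W] {m : ℕ}

lemma ncard_cls (c : W → Fin m) (r : Fin m) :
    {v | c v = r}.ncard = (univ.filter (fun v => c v = r)).card := by
  rw [← Set.ncard_coe_finset]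
  congr 1
  ext v
  simp

lemma prod_lt_aux (f g : Fin m → ℕ) (t r : Fin m) (htr : t ≠ r)
    (hpos : ∀ q, 0 < f q) (hgt : g t + 1 = f t) (hgr : g r = f r + 1)
    (hother : ∀ q, q ≠ t → q ≠ r → g q = f q) (hlt : f r + 2 ≤ f t) :
    ∏ q, f q < ∏ q, g q := by
  have ht : t ∈ (univ : Finset (Fin m)) := mem_univ t
  have hr' : r ∈ univ.erase t := by simp [Ne.symm htr]
  rw [← Finset.mul_prod_erase univ f ht, ← Finset.mul_prod_erase univ g ht,
    ← Finset.mul_prod_erase _ f hr', ← Finset.mul_prod_erase _ g hr']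
  have hP : ∏ q ∈ (univ.erase t).erase r, g q = ∏ q ∈ (univ.erase t).erase r, f q := by
    refine Finset.prod_congr rfl (fun q hq => ?_)
    simp only [mem_erase] at hq
    exact hother q hq.2.1 hq.1
  rw [hP, ← mul_assoc, ← mul_assoc]
  have hPpos : 0 < ∏ q ∈ (univ.erase t).erase r, f q :=
    Finset.prod_pos (fun q _ => hpos q)
  have key : f t * f r < g t * g r := by nlinarith [hpos t, hpos r]
  exact Nat.mul_lt_mul_of_lt_of_le key (le_refl _) hPpos

lemma exchange (G : SimpleGraph W) (c : W → Fin m) (hc : IsProperColoring G c)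
    (hmax : ∀ c' : W → Fin m, IsProperColoring G c' →
      ∏ i : Fin m, (univ.filter (fun v => c' v = i)).card ≤
        ∏ i : Fin m, (univ.filter (fun v => c v = i)).card)
    (hpos : ∀ q, 0 < (univ.filter (fun v => c v = q)).card)
    (v₀ : W) (r : Fin m) (hfree : ∀ u, G.Adj v₀ u → c u ≠ r)
    (hsz : (univ.filter (fun v => c v = r)).card + 2 ≤
      (univ.filter (fun v => c v = c v₀)).card) : False := by
  have hr : r ≠ c v₀ := by
    intro h
    rw [h] at hsz
    omega
  set c' : W → Fin m := Function.update c v₀ r with hc'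
  have hc'p : IsProperColoring G c' := by
    intro u v huv
    rcases eq_or_ne u v₀ with rfl | hu
    · have hv : v ≠ u := fun h => G.loopless.irrefl u (h ▸ huv)
      rw [hc', Function.update_self, Function.update_of_ne hv]
      exact fun h => hfree v huv h.symm
    · rcases eq_or_ne v v₀ with rfl | hv
      · rw [hc', Function.update_self, Function.update_of_ne hu]
        exact hfree u (G.adj_symm huv)
      · rw [hc', Function.update_of_ne hu, Function.update_of_ne hv]
        exact hc u v huv
  have hvr : v₀ ∉ univ.filter (fun v => c v = r) := by
    simp only [mem_filter, mem_univ, true_and]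
    exact fun h => hr h.symm
  have hvt : v₀ ∈ univ.filter (fun v => c v = c v₀) := by simp
  have e1 : univ.filter (fun v => c' v = r) = insert v₀ (univ.filter (fun v => c v = r)) := by
    ext w
    rcases eq_or_ne w v₀ with rfl | hw
    · simp [hc', Function.update_self]
    · simp [hc', Function.update_of_ne hw, hw]
  have e2 : univ.filter (fun v => c' v = c v₀) = (univ.filter (fun v => c v = c v₀)).erase v₀ := by
    ext w
    rcases eq_or_ne w v₀ with rfl | hw
    · constructor
      · intro hmem
        simp only [mem_filter, hc', Function.update_self] at hmem
        exact absurd hmem.2 hr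
      · intro hmem
        exact absurd (mem_erase.mp hmem).1 (by simp)
    · simp [hc', Function.update_of_ne hw, hw]
  have e3 : ∀ q, q ≠ c v₀ → q ≠ r →
      univ.filter (fun v => c' v = q) = univ.filter (fun v => c v = q) := by
    intro q h1 h2
    ext w
    rcases eq_or_ne w v₀ with rfl | hw
    · simp [hc', Function.update_self, Ne.symm h2, Ne.symm h1]
    · simp [hc', Function.update_of_ne hw]
  have hlt : ∏ i : Fin m, (univ.filter (fun v => c v = i)).card <
      ∏ i : Fin m, (univ.filter (fun v => c' v = i)).card := by
    refine prod_lt_aux _ _ (c v₀) r (Ne.symm hr) hpos ?_ ?_ ?_ hsz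
    · rw [e2, card_erase_of_mem hvt]
      have := hpos (c v₀); omega
    · rw [e1, card_insert_of_notMem hvr]
    · intro q h1 h2
      rw [e3 q h1 h2]
  exact absurd (hmax c' hc'p) (not_le.mpr hlt)


end AuxGeneric

section Aux
variable {n k B : ℕ} {a : Fin n → ℕ}

/-- copy index of a vertex, as a natural number (none for universal vertices). -/
abbrev cidx (u : GLSV n k B a) : Option ℕ := u.2.map (fun p => (p.1 : ℕ))

def GRel (u v : GLSV n k B a) : Prop :=
  (u.2 = none ∧ v.2 = none) ∨
    (u.1 = v.1 ∧ (u.2 = none ∨ v.2 = none ∨ ∃ c : ℕ, cidx u = some c ∧ cidx v = some c))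

lemma gadj_iff (u v : GLSV n k B a) :
    (GLSPlus n k B a).Adj u v ↔ u ≠ v ∧ GRel u v := by
  unfold GLSPlus GLSGraph
  simp only [SimpleGraph.sup_adj, SimpleGraph.fromRel_adj]
  constructor
  · rintro (⟨hne, h⟩ | ⟨hne, h⟩)
    · refine ⟨hne, ?_⟩
      rcases h with (⟨h1, h2⟩ | ⟨h1, h2, h3⟩) | (⟨h1, h2⟩ | ⟨h1, h2, h3⟩)
      · exact Or.inr ⟨h1, h2⟩
      · exact Or.inl ⟨h1, h2⟩
      · refine Or.inr ⟨h1.symm, ?_⟩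
        rcases h2 with h | h | ⟨cc, hc1, hc2⟩
        · exact Or.inr (Or.inl h)
        · exact Or.inl h
        · exact Or.inr (Or.inr ⟨cc, hc2, hc1⟩)
      · exact Or.inl ⟨h2, h1⟩
    · refine ⟨hne, Or.inl ?_⟩; tauto
  · rintro ⟨hne, (⟨h1, h2⟩ | ⟨h1, h2⟩)⟩
    · exact Or.inr ⟨hne, Or.inl ⟨h1, h2⟩⟩
    · exact Or.inl ⟨hne, Or.inl (Or.inl ⟨h1, h2⟩)⟩

def yv (g : Fin (n + 1)) : GLSV n k B a := ⟨g, none⟩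

def cv (g : Fin (n + 1)) (cp : Fin (glsPar n B a g + 1)) (p : Fin k) : GLSV n k B a :=
  ⟨g, some (cp, p)⟩

lemma adj_yy {g h : Fin (n + 1)} (hne : g ≠ h) :
    (GLSPlus n k B a).Adj (yv g) (yv h) := by
  rw [gadj_iff]
  refine ⟨fun he => hne (congrArg Sigma.fst he), Or.inl ⟨rfl, rfl⟩⟩

lemma adj_y_cv (g : Fin (n + 1)) (cp : Fin (glsPar n B a g + 1)) (p : Fin k) :
    (GLSPlus n k B a).Adj (yv g) (cv g cp p) := by
  rw [gadj_iff]
  constructor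
  · intro he
    simpa [yv, cv] using he
  · exact Or.inr ⟨rfl, Or.inl rfl⟩

lemma adj_cv_cv (g : Fin (n + 1)) (cp : Fin (glsPar n B a g + 1)) {p q : Fin k}
    (hne : p ≠ q) : (GLSPlus n k B a).Adj (cv g cp p) (cv g cp q) := by
  rw [gadj_iff]
  constructor
  · intro he
    apply hne
    simpa [cv] using he
  · exact Or.inr ⟨rfl, Or.inr (Or.inr ⟨cp.1, rfl, rfl⟩)⟩

lemma adj_cv_cases {g : Fin (n + 1)} {cp : Fin (glsPar n B a g + 1)} {p : Fin k}
    {u : GLSV n k B a} (h : (GLSPlus n k B a).Adj (cv g cp p) u) :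
    u = yv g ∨ ∃ q : Fin k, q ≠ p ∧ u = cv g cp q := by
  rw [gadj_iff] at h
  obtain ⟨hne, hr⟩ := h
  obtain ⟨g', o⟩ := u
  rcases hr with ⟨h1, h2⟩ | ⟨h1, h2⟩
  · exact absurd h1 (by simp [cv])
  · simp only [cv] at h1
    subst h1
    rcases h2 with h | h | ⟨cc, hc1, hc2⟩
    · simp [cv] at h
    · simp only at h
      subst h
      exact Or.inl rfl
    · simp only [cv, Option.map_some] at hc1
      rcases o with _ | ⟨cq, q⟩
      · simp at hc2
      · have hcc : cp.1 = cc := by injection hc1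
        have hcc2 : (cq.1 : ℕ) = cc := by
          have := hc2
          injection this
        have : cq = cp := Fin.ext (hcc2.trans hcc.symm)
        subst this
        refine Or.inr ⟨q, ?_, rfl⟩
        intro hqp
        exact hne (by rw [hqp]; rfl)

end Aux


section Aux2
variable {n k B : ℕ} {a : Fin n → ℕ}

def c0 (n k B : ℕ) (a : Fin n → ℕ) (hkn : k ≤ n) : GLSV n k B a → Fin (n + 2) := fun v =>
  match v with
  | ⟨g, none⟩ => g.castSucc
  | ⟨_g, some (_cp, p)⟩ =>
    if _g.val = 0 ∧ p.val = 0 then Fin.last (n + 1)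
    else if p.val < _g.val then ⟨p.val, by have := _g.isLt; omega⟩
    else ⟨p.val + 1, by have := p.isLt; omega⟩

lemma c0_y (hkn : k ≤ n) (g : Fin (n + 1)) :
    c0 n k B a hkn ⟨g, none⟩ = g.castSucc := rfl

lemma c0_c (hkn : k ≤ n) (g : Fin (n + 1)) (cp : Fin (glsPar n B a g + 1)) (p : Fin k) :
    c0 n k B a hkn ⟨g, some (cp, p)⟩ =
      if g.val = 0 ∧ p.val = 0 then Fin.last (n + 1)
      else if p.val < g.val then ⟨p.val, by have := g.isLt; omega⟩
      else ⟨p.val + 1, by have := p.isLt; omega⟩ := rfl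

lemma c0_surj (hk : 1 ≤ k) (hkn : k ≤ n) (r : Fin (n + 2)) :
    ∃ v : GLSV n k B a, c0 n k B a hkn v = r := by
  rcases lt_or_ge r.val (n + 1) with h | h
  · exact ⟨⟨⟨r.val, h⟩, none⟩, Fin.ext (by simp [c0_y])⟩
  · have hr : r.val = n + 1 := by have := r.isLt; omega
    refine ⟨⟨0, some (⟨0, Nat.succ_pos _⟩, ⟨0, hk⟩)⟩, ?_⟩
    rw [c0_c]
    rw [if_pos ⟨rfl, rfl⟩]
    exact Fin.ext (by simp [hr])


lemma c0_proper (hk : 1 ≤ k) (hkn : k ≤ n) :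
    IsProperColoring (GLSPlus n k B a) (c0 n k B a hkn) := by
  intro u v huv
  rw [gadj_iff] at huv
  obtain ⟨hne, hrel⟩ := huv
  obtain ⟨g, og⟩ := u
  obtain ⟨g', og'⟩ := v
  rcases hrel with ⟨h1, h2⟩ | ⟨h1, h2⟩
  · -- both universal vertices
    simp only at h1 h2
    subst h1; subst h2
    rw [c0_y, c0_y]
    intro heq
    exact hne (by rw [Fin.castSucc_inj.mp heq])
  · simp only at h1
    subst h1
    have hgn := g.isLt
    rcases og with _ | ⟨cp, p⟩ <;> rcases og' with _ | ⟨cq, q⟩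
    · exact absurd rfl hne
    · -- universal vs copy vertex
      have hq := q.isLt
      rw [c0_y, c0_c]
      intro heq
      have hv := congrArg Fin.val heq
      revert hv
      split_ifs <;> simp only [Fin.coe_castSucc, Fin.val_last] <;> omega
    · -- copy vertex vs universal
      have hp := p.isLt
      rw [c0_y, c0_c]
      intro heq
      have hv := congrArg Fin.val heq
      revert hv
      split_ifs <;> simp only [Fin.coe_castSucc, Fin.val_last] <;> omega
    · -- two copy vertices; they must be in the same copy
      rcases h2 with h | h | ⟨cc, hc1, hc2⟩
      · simp at h
      · simp at h
      · have hcc : cp.1 = cc := by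
          have := hc1
          injection this
        have hcc2 : cq.1 = cc := by
          have := hc2
          injection this
        have hcpq : cq = cp := Fin.ext (hcc2.trans hcc.symm)
        subst hcpq
        have hpq : p.val ≠ q.val := by
          intro hv
          exact hne (by rw [Fin.ext hv])
        have hp := p.isLt
        have hq := q.isLt
        rw [c0_c, c0_c]
        intro heq
        have hv := congrArg Fin.val heq
        revert hv
        split_ifs <;> simp only [Fin.val_last] <;> omega

lemma eq_yv {v : GLSV n k B a} (h : v.2 = none) : v = yv v.1 := by
  obtain ⟨g, o⟩ := v
  rcases o with _ | x
  · rfl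
  · exact absurd h (by simp)

lemma eq_cv {v : GLSV n k B a} (h : v.2 ≠ none) :
    ∃ g cp p, v = cv g cp p := by
  obtain ⟨g, o⟩ := v
  rcases o with _ | ⟨cp, p⟩
  · simp at h
  · exact ⟨g, cp, p, rfl⟩

lemma inj_count {m : ℕ} (c : GLSV n k B a → Fin m)
    (hc : IsProperColoring (GLSPlus n k B a) c) (i : Fin m)
    (S T : Finset (GLSV n k B a))
    (hSi : ∀ v ∈ S, c v = i) (hSny : ∀ v ∈ S, v.2 ≠ none)
    (h : ∀ v ∈ S, ∃ w ∈ T, v.1 = w.1 ∧ cidx v = cidx w) : S.card ≤ T.card := by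
  classical
  apply Finset.card_le_card_of_injOn
    (fun v => if h' : ∃ w ∈ T, v.1 = w.1 ∧ cidx v = cidx w then h'.choose else v)
  · intro v hv
    dsimp only
    rw [dif_pos (h v hv)]
    exact (h v hv).choose_spec.1
  · intro v hv v' hv' heq
    simp only [Finset.mem_coe] at hv hv'
    dsimp only at heq
    rw [dif_pos (h v hv), dif_pos (h v' hv')] at heq
    obtain ⟨he1, he2⟩ := (h v hv).choose_spec.2
    obtain ⟨he1', he2'⟩ := (h v' hv').choose_spec.2
    rw [heq] at he1 he2
    have h11 : v.1 = v'.1 := he1.trans he1'.symm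
    have h22 : cidx v = cidx v' := he2.trans he2'.symm
    obtain ⟨g, cp, p, rfl⟩ := eq_cv (hSny v hv)
    obtain ⟨g', cp', p', rfl⟩ := eq_cv (hSny v' hv')
    have hg : g = g' := h11
    subst hg
    simp only [cidx, cv, Option.map_some] at h22
    have : cp.val = cp'.val := by injection h22
    have hcp : cp = cp' := Fin.ext this
    subst hcp
    by_contra hvv
    have hppq : p ≠ p' := by
      intro hp
      exact hvv (by rw [hp])
    have := hc _ _ (adj_cv_cv g cp hppq)
    rw [hSi _ hv, hSi _ hv'] at this
    exact this rfl

lemma cls_card_le_ny {m : ℕ} (c : GLSV n k B a → Fin m)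
    (hc : IsProperColoring (GLSPlus n k B a) c) (r : Fin m) :
    (univ.filter (fun v => c v = r)).card ≤
      (univ.filter (fun v => c v = r ∧ v.2 ≠ none)).card + 1 := by
  classical
  have hsub : univ.filter (fun v => c v = r) ⊆
      (univ.filter (fun v => c v = r ∧ v.2 ≠ none)) ∪
        (univ.filter (fun v => c v = r ∧ v.2 = none)) := by
    intro v hv
    simp only [mem_filter, mem_univ, true_and, mem_union] at hv ⊢
    tauto
  have hone : (univ.filter (fun v => c v = r ∧ v.2 = none)).card ≤ 1 := by
    refine Finset.card_le_one.mpr (fun v hv w hw => ?_)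
    simp only [mem_filter, mem_univ, true_and] at hv hw
    by_contra hvw
    have hv' := eq_yv hv.2
    have hw' := eq_yv hw.2
    have hne : v.1 ≠ w.1 := by
      intro h
      apply hvw
      rw [hv', hw', h]
    have hadj : (GLSPlus n k B a).Adj v w := by
      rw [hv', hw']
      exact adj_yy hne
    have := hc _ _ hadj
    rw [hv.1, hw.1] at this
    exact this rfl
  calc (univ.filter (fun v => c v = r)).card
      ≤ _ := Finset.card_le_card hsub
    _ ≤ _ + _ := Finset.card_union_le _ _
    _ ≤ _ + 1 := by omega

lemma y_inj {m : ℕ} (c : GLSV n k B a → Fin m)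
    (hc : IsProperColoring (GLSPlus n k B a) c) {g g' : Fin (n + 1)}
    (h : c (yv g) = c (yv g')) : g = g' := by
  by_contra hne
  exact hc _ _ (adj_yy hne) h

end Aux2

open Finset in
lemma glsPar_le_B {n B : ℕ} {a : Fin n → ℕ} (ha : ∀ i, a i ≤ B) (g : Fin (n + 1)) :
    glsPar n B a g ≤ B := by
  induction g using Fin.cases with
  | zero => simp [glsPar]
  | succ i => simpa [glsPar] using ha i

theorem glsPlus_max_product_coloring_claim (n k B : ℕ) (hn : 1 ≤ n) (hk : 1 ≤ k)
    (hkn : k ≤ n) (hB : 1 ≤ B) (a : Fin n → ℕ) (ha : ∀ i, 1 ≤ a i ∧ a i ≤ B)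
    (hsum : ∑ i, a i = k * B)
    (c : GLSV n k B a → Fin (n + 2))
    (hc : IsProperColoring (GLSPlus n k B a) c)
    (hmax : ∀ c' : GLSV n k B a → Fin (n + 2), IsProperColoring (GLSPlus n k B a) c' →
      ∏ i : Fin (n + 2), {v | c' v = i}.ncard ≤ ∏ i : Fin (n + 2), {v | c v = i}.ncard) :
    ∀ i j : Fin (n + 2), {v | c v = i}.ncard ≤ {v | c v = j}.ncard + 2 := by
  classical
  have hmax' : ∀ c' : GLSV n k B a → Fin (n + 2), IsProperColoring (GLSPlus n k B a) c' →
      ∏ r : Fin (n + 2), (univ.filter (fun v => c' v = r)).card ≤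
        ∏ r : Fin (n + 2), (univ.filter (fun v => c v = r)).card := by
    intro c' h
    have e : ∀ d : GLSV n k B a → Fin (n + 2),
        ∏ r : Fin (n + 2), {v | d v = r}.ncard =
          ∏ r : Fin (n + 2), (univ.filter (fun v => d v = r)).card :=
      fun d => Finset.prod_congr rfl (fun r _ => ncard_cls d r)
    rw [← e c', ← e c]
    exact hmax c' h
  -- positivity of all classes of `c`
  have hpos : ∀ q : Fin (n + 2), 0 < (univ.filter (fun v => c v = q)).card := by
    intro q
    by_contra hq
    have h0 : (univ.filter (fun v => c v = q)).card = 0 := by omega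
    have hzero : ∏ r : Fin (n + 2), (univ.filter (fun v => c v = r)).card = 0 :=
      Finset.prod_eq_zero (mem_univ q) h0
    have h1 : 0 < ∏ r : Fin (n + 2),
        (univ.filter (fun v => c0 n k B a hkn v = r)).card := by
      refine Finset.prod_pos (fun r _ => Finset.card_pos.mpr ?_)
      obtain ⟨v, hv⟩ := c0_surj (a := a) (B := B) hk hkn r
      exact ⟨v, by simp [hv]⟩
    have h2 := hmax' _ (c0_proper hk hkn)
    omega
  -- exchange principle
  have hex : ∀ (v₀ : GLSV n k B a) (r : Fin (n + 2)),
      (∀ u, (GLSPlus n k B a).Adj v₀ u → c u ≠ r) →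
      (univ.filter (fun v => c v = r)).card + 2 ≤
        (univ.filter (fun v => c v = c v₀)).card → False :=
    fun v₀ r hfree hsz => exchange (GLSPlus n k B a) c hc hmax' hpos v₀ r hfree hsz
  intro i j
  rw [ncard_cls c i, ncard_cls c j]
  by_contra hcon
  push_neg at hcon
  -- replace j by a color of minimum class size
  obtain ⟨j0, -, hj0⟩ := Finset.exists_min_image univ
    (fun r => (univ.filter (fun v => c v = r)).card) ⟨i, mem_univ i⟩
  have hj0' : ∀ r : Fin (n + 2), (univ.filter (fun v => c v = j0)).card ≤
      (univ.filter (fun v => c v = r)).card := by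
    intro r
    exact hj0 r (mem_univ r)
  have hgap : (univ.filter (fun v => c v = j0)).card + 3 ≤
      (univ.filter (fun v => c v = i)).card := by
    have := hj0' j
    omega
  have hij0 : i ≠ j0 := by
    intro h
    rw [h] at hgap
    omega
  have hNYle : ∀ r : Fin (n + 2), (univ.filter (fun v => c v = r)).card ≤
      (univ.filter (fun v => c v = r ∧ v.2 ≠ none)).card + 1 :=
    fun r => cls_card_le_ny c hc r
  have hNYsub : ∀ r : Fin (n + 2), (univ.filter (fun v => c v = r ∧ v.2 ≠ none)).card ≤
      (univ.filter (fun v => c v = r)).card := by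
    intro r
    apply Finset.card_le_card
    intro v hv
    simp only [mem_filter, mem_univ, true_and] at hv ⊢
    exact hv.1
  by_cases hyj : ∃ f : Fin (n + 1), c (yv f) = j0
  case neg =>
    -- Case 1 : no universal vertex is colored j0
    push_neg at hyj
    have hblocked : ∀ v ∈ univ.filter (fun v => c v = i ∧ v.2 ≠ none),
        ∃ w ∈ univ.filter (fun v => c v = j0 ∧ v.2 ≠ none),
          v.1 = w.1 ∧ cidx v = cidx w := by
      intro v hv
      simp only [mem_filter, mem_univ, true_and] at hv
      obtain ⟨hvi, hvny⟩ := hv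
      obtain ⟨g, cp, p, rfl⟩ := eq_cv hvny
      by_cases hfr : ∀ u, (GLSPlus n k B a).Adj (cv g cp p) u → c u ≠ j0
      · exact absurd (hex _ j0 hfr (by rw [hvi]; omega)) not_false
      · push_neg at hfr
        obtain ⟨u, hadj, hu⟩ := hfr
        rcases adj_cv_cases hadj with rfl | ⟨q, hq, rfl⟩
        · exact absurd hu (hyj g)
        · exact ⟨cv g cp q, mem_filter.mpr ⟨mem_univ _, hu, by simp [cv]⟩, rfl, rfl⟩
    have h1 : (univ.filter (fun v => c v = i ∧ v.2 ≠ none)).card ≤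
        (univ.filter (fun v => c v = j0 ∧ v.2 ≠ none)).card := by
      refine inj_count c hc i _ _ ?_ ?_ hblocked
      · intro v hv
        simp only [mem_filter, mem_univ, true_and] at hv
        exact hv.1
      · intro v hv
        simp only [mem_filter, mem_univ, true_and] at hv
        exact hv.2
    have h2 := hNYle i
    have h3 := hNYsub j0
    omega
  case pos =>
    obtain ⟨fs, hfs⟩ := hyj
    -- Case 2 : the universal vertex of flower `fs` is colored j0
    have hyg : ∀ g : Fin (n + 1), g ≠ fs → c (yv g) ≠ j0 := by
      intro g hg h
      exact hg (y_inj c hc (h.trans hfs.symm))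
    have hflower : ∀ (cp : Fin (glsPar n B a fs + 1)) (p : Fin k),
        c (cv fs cp p) ≠ j0 := by
      intro cp p h
      have := hc _ _ (adj_y_cv fs cp p)
      rw [hfs, h] at this
      exact this rfl
    -- every i-vertex outside flower fs has a j0-vertex in its copy
    have hSblocked : ∀ v ∈ univ.filter (fun v => c v = i ∧ v.2 ≠ none ∧ v.1 ≠ fs),
        ∃ w ∈ univ.filter (fun v => c v = j0 ∧ v.2 ≠ none),
          v.1 = w.1 ∧ cidx v = cidx w := by
      intro v hv
      simp only [mem_filter, mem_univ, true_and] at hv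
      obtain ⟨hvi, hvny, hvfs⟩ := hv
      obtain ⟨g, cp, p, rfl⟩ := eq_cv hvny
      by_cases hfr : ∀ u, (GLSPlus n k B a).Adj (cv g cp p) u → c u ≠ j0
      · exact absurd (hex _ j0 hfr (by rw [hvi]; omega)) not_false
      · push_neg at hfr
        obtain ⟨u, hadj, hu⟩ := hfr
        rcases adj_cv_cases hadj with rfl | ⟨q, hq, rfl⟩
        · exact absurd hu (hyg g hvfs)
        · exact ⟨cv g cp q, mem_filter.mpr ⟨mem_univ _, hu, by simp [cv]⟩, rfl, rfl⟩
    have hScard : (univ.filter (fun v => c v = i ∧ v.2 ≠ none ∧ v.1 ≠ fs)).card ≤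
        (univ.filter (fun v => c v = j0 ∧ v.2 ≠ none)).card := by
      refine inj_count c hc i _ _ ?_ ?_ hSblocked
      · intro v hv
        simp only [mem_filter, mem_univ, true_and] at hv
        exact hv.1
      · intro v hv
        simp only [mem_filter, mem_univ, true_and] at hv
        exact hv.2.1
    -- the j0 class strictly contains all non-universal j0 vertices plus yv fs
    have hNYj0lt : (univ.filter (fun v => c v = j0 ∧ v.2 ≠ none)).card <
        (univ.filter (fun v => c v = j0)).card := by
      apply Finset.card_lt_card
      rw [Finset.ssubset_iff_of_subset (by
        intro v hv
        simp only [mem_filter, mem_univ, true_and] at hv ⊢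
        exact hv.1)]
      refine ⟨yv fs, ?_, ?_⟩
      · simp only [mem_filter, mem_univ, true_and]
        exact hfs
      · simp only [mem_filter, mem_univ, true_and, not_and]
        intro
        simp [yv]
    -- split the i class according to flower fs
    have hTsplit : (univ.filter (fun v => c v = i ∧ v.2 ≠ none)).card ≤
        (univ.filter (fun v => c v = i ∧ v.2 ≠ none ∧ v.1 ≠ fs)).card +
        (univ.filter (fun v => c v = i ∧ v.2 ≠ none ∧ v.1 = fs)).card := by
      have hsub : univ.filter (fun v => c v = i ∧ v.2 ≠ none) ⊆
          (univ.filter (fun v => c v = i ∧ v.2 ≠ none ∧ v.1 ≠ fs)) ∪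
          (univ.filter (fun v => c v = i ∧ v.2 ≠ none ∧ v.1 = fs)) := by
        intro v hv
        simp only [mem_filter, mem_univ, true_and, mem_union] at hv ⊢
        by_cases hvf : v.1 = fs
        · exact Or.inr ⟨hv.1, hv.2, hvf⟩
        · exact Or.inl ⟨hv.1, hv.2, hvf⟩
      exact (Finset.card_le_card hsub).trans (Finset.card_union_le _ _)
    -- flower fs contains an i-colored copy vertex v1
    have hTpos : 0 < (univ.filter (fun v => c v = i ∧ v.2 ≠ none ∧ v.1 = fs)).card := by
      have h1 := hNYle i
      omega
    obtain ⟨v1, hv1⟩ := Finset.card_pos.mp hTpos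
    simp only [mem_filter, mem_univ, true_and] at hv1
    obtain ⟨hv1i, hv1ny, hv1fs⟩ := hv1
    obtain ⟨g1, cp1, p1, rfl⟩ := eq_cv hv1ny
    have hg1 : g1 = fs := hv1fs
    subst hg1
    -- the set of colors used in the copy of v1
    set Q : Finset (Fin (n + 2)) :=
      Finset.image (fun p : Fin k => c (cv g1 cp1 p)) univ with hQ
    have hQinj : Function.Injective (fun p : Fin k => c (cv g1 cp1 p)) := by
      intro p q hpq
      by_contra hne2
      exact hc _ _ (adj_cv_cv g1 cp1 hne2) hpq
    have hQcard : Q.card = k := by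
      rw [hQ, Finset.card_image_of_injective _ hQinj, card_univ, Fintype.card_fin]
    have hiQ : i ∈ Q := by
      rw [hQ, Finset.mem_image]
      exact ⟨p1, mem_univ _, hv1i⟩
    -- every color outside Q ∪ {j0} has near-maximum class size
    have hSubC : ∀ r : Fin (n + 2), r ∉ Q → r ≠ j0 →
        (univ.filter (fun v => c v = i)).card ≤
          (univ.filter (fun v => c v = r)).card + 1 := by
      intro r hrQ hrj
      by_contra hcon2
      push_neg at hcon2
      refine hex (cv g1 cp1 p1) r ?_ (by rw [hv1i]; omega)
      intro u hadj
      rcases adj_cv_cases hadj with rfl | ⟨q, hq, rfl⟩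
      · rw [hfs]
        exact Ne.symm hrj
      · intro h
        exact hrQ (by rw [hQ, Finset.mem_image]; exact ⟨q, mem_univ _, h⟩)
    have hbig : ∀ r : Fin (n + 2), r ∉ Q → r ≠ j0 →
        (univ.filter (fun v => c v = j0)).card + 2 ≤
          (univ.filter (fun v => c v = r)).card := by
      intro r h1 h2
      have := hSubC r h1 h2
      omega
    -- every copy outside flower g1 contains a j0-colored vertex
    have hSubD : ∀ g : Fin (n + 1), g ≠ g1 → ∀ cp : Fin (glsPar n B a g + 1),
        ∃ q : Fin k, c (cv g cp q) = j0 := by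
      intro g hg cp
      by_contra hno
      push_neg at hno
      have hsmall : ∀ p : Fin k, (univ.filter (fun v => c v = c (cv g cp p))).card ≤
          (univ.filter (fun v => c v = j0)).card + 1 := by
        intro p
        by_contra hbig2
        push_neg at hbig2
        refine hex (cv g cp p) j0 ?_ (by omega)
        intro u hadj
        rcases adj_cv_cases hadj with rfl | ⟨q, hq, rfl⟩
        · exact hyg g hg
        · exact hno q
      have hmem : ∀ p : Fin k, c (cv g cp p) ∈ Q.erase i := by
        intro p
        refine Finset.mem_erase.mpr ⟨?_, ?_⟩
        · intro h
          have h1 := hsmall p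
          rw [h] at h1
          omega
        · by_contra hq
          have h1 := hbig _ hq (hno p)
          have h2 := hsmall p
          omega
      have hinj2 : (univ : Finset (Fin k)).card ≤ (Q.erase i).card := by
        apply Finset.card_le_card_of_injOn (fun p => c (cv g cp p)) (fun p _ => hmem p)
        intro p _ q _ hpq
        by_contra hne2
        exact hc _ _ (adj_cv_cv g cp hne2) hpq
      rw [card_univ, Fintype.card_fin, Finset.card_erase_of_mem hiQ, hQcard] at hinj2
      omega
    -- count the copies outside flower g1 : each contains a j0 vertex
    set D : Finset (Σ g : Fin (n + 1), Fin (glsPar n B a g + 1)) :=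
      ((univ : Finset (Fin (n + 1))).erase g1).sigma
        (fun g => (univ : Finset (Fin (glsPar n B a g + 1)))) with hD
    have hEx : ∀ x ∈ D, ∃ w ∈ univ.filter (fun v => c v = j0 ∧ v.2 ≠ none),
        w.1 = x.1 ∧ cidx w = some ((x.2 : Fin (glsPar n B a x.1 + 1)) : ℕ) := by
      intro x hx
      rw [hD, Finset.mem_sigma] at hx
      obtain ⟨q, hq⟩ := hSubD x.1 (Finset.mem_erase.mp hx.1).1 x.2
      exact ⟨cv x.1 x.2 q, mem_filter.mpr ⟨mem_univ _, hq, by simp [cv]⟩, rfl, rfl⟩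
    have hDcount : D.card ≤ (univ.filter (fun v => c v = j0 ∧ v.2 ≠ none)).card := by
      apply Finset.card_le_card_of_injOn (fun x =>
        if h' : ∃ w ∈ univ.filter (fun v => c v = j0 ∧ v.2 ≠ none),
            w.1 = x.1 ∧ cidx w = some ((x.2 : Fin (glsPar n B a x.1 + 1)) : ℕ)
          then h'.choose else yv x.1)
      · intro x hx
        dsimp only
        rw [dif_pos (hEx x hx)]
        exact (hEx x hx).choose_spec.1
      · intro x hx x' hx' heq
        simp only [Finset.mem_coe] at hx hx'
        dsimp only at heq
        rw [dif_pos (hEx x hx), dif_pos (hEx x' hx')] at heq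
        obtain ⟨he1, he2⟩ := (hEx x hx).choose_spec.2
        obtain ⟨he1', he2'⟩ := (hEx x' hx').choose_spec.2
        rw [heq] at he1 he2
        have h11 : x.1 = x'.1 := he1.symm.trans he1'
        obtain ⟨g, cp⟩ := x
        obtain ⟨g', cp'⟩ := x'
        dsimp only at h11
        subst h11
        have h22 : ((cp : Fin (glsPar n B a g + 1)) : ℕ) = ((cp' : Fin (glsPar n B a g + 1)) : ℕ) := by
          have := he2.symm.trans he2'
          injection this
        have : cp = cp' := Fin.ext h22
        rw [this]
    have htot : ∑ g : Fin (n + 1), (glsPar n B a g + 1) = B + 1 + (k * B + n) := by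
      rw [Fin.sum_univ_succ]
      simp only [glsPar, Fin.cases_zero, Fin.cases_succ]
      rw [Finset.sum_add_distrib, hsum]
      simp
    have herase : ∑ g ∈ (univ : Finset (Fin (n + 1))).erase g1, (glsPar n B a g + 1) +
        (glsPar n B a g1 + 1) = ∑ g : Fin (n + 1), (glsPar n B a g + 1) :=
      Finset.sum_erase_add _ _ (mem_univ g1)
    have hg1B : glsPar n B a g1 ≤ B := glsPar_le_B (fun i => (ha i).2) g1
    have hDcard : k * B + n ≤ D.card := by
      rw [hD, Finset.card_sigma]
      simp only [card_univ, Fintype.card_fin]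
      omega
    have hs_lb : k * B + n + 1 ≤ (univ.filter (fun v => c v = j0)).card := by
      have := hNYj0lt
      omega
    -- total number of vertices
    have hN : Fintype.card (GLSV n k B a) = (n + 1) + (B + 1 + (k * B + n)) * k := by
      rw [Fintype.card_sigma]
      have hcard : ∀ g : Fin (n + 1),
          Fintype.card (Option (Fin (glsPar n B a g + 1) × Fin k)) =
            (glsPar n B a g + 1) * k + 1 := by
        intro g
        simp
      rw [Finset.sum_congr rfl (fun g _ => hcard g), Finset.sum_add_distrib,
        ← Finset.sum_mul, htot]
      simp [add_comm]
    have htotal : ∑ r : Fin (n + 2), (univ.filter (fun v => c v = r)).card =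
        Fintype.card (GLSV n k B a) := by
      rw [← Finset.card_univ]
      exact (Finset.card_eq_sum_card_fiberwise (fun v _ => mem_univ (c v))).symm
    -- split the sum of class sizes
    have hj0R : j0 ∈ (univ : Finset (Fin (n + 2))).erase i :=
      Finset.mem_erase.mpr ⟨Ne.symm hij0, mem_univ _⟩
    have hsplit : ∑ r : Fin (n + 2), (univ.filter (fun v => c v = r)).card =
        (univ.filter (fun v => c v = i)).card +
          ((univ.filter (fun v => c v = j0)).card +
            ∑ r ∈ ((univ : Finset (Fin (n + 2))).erase i).erase j0,
              (univ.filter (fun v => c v = r)).card) := by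
      rw [← Finset.add_sum_erase _ _ (mem_univ i), ← Finset.add_sum_erase _ _ hj0R]
    set R : Finset (Fin (n + 2)) := ((univ : Finset (Fin (n + 2))).erase i).erase j0 with hR
    have hRcard : R.card = n := by
      rw [hR, Finset.card_erase_of_mem hj0R, Finset.card_erase_of_mem (mem_univ i),
        card_univ, Fintype.card_fin]
      omega
    have hRlow : ∀ r ∈ R, (if r ∈ Q then (univ.filter (fun v => c v = j0)).card
        else (univ.filter (fun v => c v = j0)).card + 2) ≤
          (univ.filter (fun v => c v = r)).card := by
      intro r hr
      rw [hR, Finset.mem_erase, Finset.mem_erase] at hr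
      split_ifs with hrQ
      · exact hj0' r
      · exact hbig r hrQ hr.1
    have hsum1 := Finset.sum_le_sum hRlow
    have hsum2 : ∑ r ∈ R, (if r ∈ Q then (univ.filter (fun v => c v = j0)).card
        else (univ.filter (fun v => c v = j0)).card + 2) =
        (R.filter (fun r => r ∈ Q)).card * (univ.filter (fun v => c v = j0)).card +
        (R.filter (fun r => ¬ r ∈ Q)).card * ((univ.filter (fun v => c v = j0)).card + 2) := by
      rw [Finset.sum_ite]
      simp [mul_comm]
    have hcards : (R.filter (fun r => r ∈ Q)).card + (R.filter (fun r => ¬ r ∈ Q)).card = n := by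
      rw [Finset.card_filter_add_card_filter_not, hRcard]
    have hQk : (R.filter (fun r => r ∈ Q)).card + 1 ≤ k := by
      have hsub : R.filter (fun r => r ∈ Q) ⊆ Q.erase i := by
        intro r hr
        rw [Finset.mem_filter, hR, Finset.mem_erase, Finset.mem_erase] at hr
        exact Finset.mem_erase.mpr ⟨hr.1.2.1, hr.2⟩
      have h1 := Finset.card_le_card hsub
      rw [Finset.card_erase_of_mem hiQ, hQcard] at h1
      omega
    -- final arithmetic contradiction
    set c1 := (R.filter (fun r => r ∈ Q)).card with hc1
    set c2 := (R.filter (fun r => ¬ r ∈ Q)).card with hc2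
    set s0 := (univ.filter (fun v => c v = j0)).card with hs0
    set si := (univ.filter (fun v => c v = i)).card with hsi
    set sR := ∑ r ∈ R, (univ.filter (fun v => c v = r)).card with hsR
    rw [htotal, hN] at hsplit
    rw [hsum2] at hsum1
    -- hsplit : (n+1) + (B+1+(k*B+n))*k = si + (s0 + sR)
    -- hsum1 : c1 * s0 + c2 * (s0 + 2) ≤ sR
    have hmul1 : n * (k * B + n + 1) ≤ n * s0 := Nat.mul_le_mul_left n hs_lb
    have hmul2 : k * B * k ≤ k * B * n := Nat.mul_le_mul_left (k * B) hkn
    have hmul3 : n * k ≤ n * n := Nat.mul_le_mul_left n hkn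
    have hc12 : c1 * s0 + c2 * (s0 + 2) = (c1 + c2) * s0 + 2 * c2 := by ring
    rw [hc12, hcards] at hsum1
    linarith [hsplit, hsum1, hgap, hs_lb, hmul1, hmul2, hmul3, hcards, hQk, hkn, hk, hB]

end BlockGraphPaper
end

section
/- Let a, n, k, B be positive integers with k ≤ n and a·n = k·B, and let G = GLS(A,k,B) be the GLS block graph built from A = (a, a, …, a) (n copies of a). Then for every integer t ≥ k+2, the graph G admits an equitable t-coloring. In particular, χ_=(G) ≤ k+2 and the set of integers t ≥ k+2 for which G admits an equitable t-coloring has no gaps. -/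
open scoped BigOperators

namespace BlockGraphPaper

variable {V : Type*}

open Finset in
/-- Core realization lemma (Gale–Ryser style greedy): given "copies" indexed by a
fintype `ι`, each with a forbidden column `β i`, and target column loads `ℓ`
with total `k * |ι|` and per-column capacity `ℓ c + #{i | β i = c} ≤ |ι|`,
each copy can be given `k` distinct allowed columns realizing the loads. -/
theorem realize_loads : ∀ (Nc : ℕ) (ι : Type) [DecidableEq ι] [Fintype ι]
    {t k : ℕ} (β : ι → Fin t) (ℓ : Fin t → ℕ),
    Fintype.card ι = Nc → (∑ c, ℓ c) = k * Nc →
    (∀ c, ℓ c + (univ.filter (fun i => β i = c)).card ≤ Nc) →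
    ∃ S : ι → Finset (Fin t), (∀ i, (S i).card = k ∧ β i ∉ S i) ∧
      ∀ c, (univ.filter (fun i => c ∈ S i)).card = ℓ c := by
  intro Nc
  induction Nc with
  | zero =>
    intro ι _ _ t k β ℓ hcard hsum hcap
    refine ⟨fun _ => ∅, fun i => absurd (Fintype.card_pos_iff.2 ⟨i⟩) (by omega), ?_⟩
    intro c
    have h0 : ℓ c = 0 := by have := hcap c; omega
    simp [h0]
  | succ m IH =>
    intro ι _ _ t k β ℓ hcard hsum hcap
    classical
    have hne : Nonempty ι := Fintype.card_pos_iff.1 (by omega)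
    set G : Fin t → ℕ := fun c => (univ.filter (fun i => β i = c)).card with hG
    have hGsum : (∑ c, G c) = m + 1 := by
      rw [← hcard]
      rw [← Finset.card_univ]
      exact (Finset.card_eq_sum_card_fiberwise (fun x _ => mem_univ (β x))).symm
    set Tight : Finset (Fin t) := univ.filter (fun c => ℓ c + G c = m + 1) with hTight
    -- choose i₀
    have hi0 : ∃ i₀ : ι, (∃ i, β i ∈ Tight) → β i₀ ∈ Tight := by
      by_cases h : ∃ i, β i ∈ Tight
      · obtain ⟨i, hi⟩ := h; exact ⟨i, fun _ => hi⟩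
      · exact ⟨Classical.arbitrary ι, fun hh => absurd hh h⟩
    obtain ⟨i₀, hi₀⟩ := hi0
    set b0 := β i₀ with hb0
    have hGb0 : 1 ≤ G b0 := by
      have : i₀ ∈ univ.filter (fun i => β i = b0) := by simp [hb0]
      exact Finset.card_pos.2 ⟨i₀, this⟩
    have hlG : ∀ c, ℓ c + G c ≤ m + 1 := hcap
    have hsumLG : (∑ c, (ℓ c + G c)) = (k+1) * (m+1) := by
      rw [Finset.sum_add_distrib, hsum, hGsum]; ring
    set T' : Finset (Fin t) := Tight.erase b0 with hT'
    have hT'k : T'.card ≤ k := by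
      by_cases h : ∃ i, β i ∈ Tight
      · have hb0T : b0 ∈ Tight := hi₀ h
        have hTcard : Tight.card * (m+1) ≤ (k+1) * (m+1) := by
          calc Tight.card * (m+1) = ∑ c ∈ Tight, (m+1) := by rw [Finset.sum_const, smul_eq_mul]
          _ = ∑ c ∈ Tight, (ℓ c + G c) := by
              refine Finset.sum_congr rfl ?_
              intro c hc
              exact ((Finset.mem_filter.1 hc).2).symm
          _ ≤ ∑ c, (ℓ c + G c) := Finset.sum_le_sum_of_subset (Finset.subset_univ _)
          _ = (k+1) * (m+1) := hsumLG
        have hTle : Tight.card ≤ k + 1 := Nat.le_of_mul_le_mul_right hTcard (by omega)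
        rw [hT', Finset.card_erase_of_mem hb0T]
        omega
      · -- no copy's β is tight; then Tight.card ≤ k
        push_neg at h
        have hTG : ∀ c ∈ Tight, G c = 0 := by
          intro c hc
          by_contra hGc
          obtain ⟨i, hi⟩ := Finset.card_pos.1 (Nat.pos_of_ne_zero hGc)
          have : β i = c := (Finset.mem_filter.1 hi).2
          exact h i (this ▸ hc)
        have hb0nT : b0 ∉ Tight := h i₀
        have hT'T : T' = Tight := Finset.erase_eq_of_notMem hb0nT
        rw [hT'T]
        by_contra hcon
        push_neg at hcon
        -- Tight.card ≥ k+1, so = k+1 and all mass in Tight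
        have hTcard : Tight.card * (m+1) ≤ (k+1) * (m+1) := by
          calc Tight.card * (m+1) = ∑ c ∈ Tight, (m+1) := by rw [Finset.sum_const, smul_eq_mul]
          _ = ∑ c ∈ Tight, (ℓ c + G c) := by
              refine Finset.sum_congr rfl ?_
              intro c hc; exact ((Finset.mem_filter.1 hc).2).symm
          _ ≤ ∑ c, (ℓ c + G c) := Finset.sum_le_sum_of_subset (Finset.subset_univ _)
          _ = (k+1) * (m+1) := hsumLG
        have hTk1 : Tight.card = k + 1 :=
          le_antisymm (Nat.le_of_mul_le_mul_right hTcard (by omega)) hcon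
        -- then sum over Tight equals total, so G vanishes outside Tight too
        have hsplit : (∑ c ∈ Tight, (ℓ c + G c)) = (k+1)*(m+1) := by
          calc (∑ c ∈ Tight, (ℓ c + G c)) = ∑ c ∈ Tight, (m+1) := by
                refine Finset.sum_congr rfl ?_
                intro c hc; exact (Finset.mem_filter.1 hc).2
          _ = (k+1) * (m+1) := by rw [Finset.sum_const, smul_eq_mul, hTk1]
        have hA : (∑ c ∈ univ.filter (· ∈ Tight), (ℓ c + G c))
            + (∑ c ∈ univ.filter (fun c => ¬ (c ∈ Tight)), (ℓ c + G c)) = (k+1)*(m+1) := by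
          rw [Finset.sum_filter_add_sum_filter_not, hsumLG]
        have hfT : univ.filter (· ∈ Tight) = Tight := by ext c; simp
        rw [hfT, hsplit] at hA
        have hB : ∀ c ∈ univ.filter (fun c => ¬ (c ∈ Tight)), ℓ c + G c = 0 :=
          Finset.sum_eq_zero_iff.1 (by omega)
        have hGzero : (∑ c, G c) = 0 := by
          refine Finset.sum_eq_zero ?_
          intro c _
          by_cases hcT : c ∈ Tight
          · exact hTG c hcT
          · have := hB c (by simp [hcT]); omega
        omega
    -- T' ⊆ support of ℓ minus b0
    set supp : Finset (Fin t) := (univ.filter (fun c => 1 ≤ ℓ c)).erase b0 with hsupp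
    have hT'supp : T' ⊆ supp := by
      intro c hc
      have hcT : c ∈ Tight := Finset.mem_of_mem_erase hc
      have hcne : c ≠ b0 := Finset.ne_of_mem_erase hc
      have hct : ℓ c + G c = m + 1 := (Finset.mem_filter.1 hcT).2
      have hGle : G c ≤ m := by
        by_contra hh
        push_neg at hh
        have hGc : G c = m + 1 := le_antisymm (by have := hlG c; omega) hh
        have : univ.filter (fun i => β i = c) = univ := by
          apply Finset.eq_univ_of_card
          rw [hcard]; exact hGc
        have hmem : i₀ ∈ univ.filter (fun i => β i = c) := by
          rw [this]; exact mem_univ i₀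
        have hβ : β i₀ = c := (Finset.mem_filter.1 hmem).2
        exact hcne (by rw [hb0, hβ])
      refine Finset.mem_erase.2 ⟨hcne, Finset.mem_filter.2 ⟨mem_univ c, by omega⟩⟩
    have hsuppk : k ≤ supp.card := by
      by_contra hcon
      push_neg at hcon
      have hsum2 : (∑ c, ℓ c) = ℓ b0 + ∑ c ∈ univ.erase b0, ℓ c :=
        (Finset.add_sum_erase univ ℓ (mem_univ b0)).symm
      have hz : ∀ c ∈ univ.erase b0, c ∉ supp → ℓ c = 0 := by
        intro c hc hcs
        by_contra hh
        exact hcs (Finset.mem_erase.2 ⟨(Finset.mem_erase.1 hc).1,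
          Finset.mem_filter.2 ⟨mem_univ c, by omega⟩⟩)
      have hsub : supp ⊆ univ.erase b0 := by
        intro c hc
        exact Finset.mem_erase.2 ⟨(Finset.mem_erase.1 hc).1, mem_univ c⟩
      have h3 : (∑ c ∈ univ.erase b0, ℓ c) = ∑ c ∈ supp, ℓ c := by
        refine (Finset.sum_subset hsub ?_).symm
        intro c hc hcs; exact hz c hc hcs
      have h4 : (∑ c ∈ supp, ℓ c) ≤ supp.card * (m+1) := by
        refine Finset.sum_le_card_nsmul supp ℓ (m+1) ?_
        intro c _; have := hlG c; omega
      have h5 : ℓ b0 ≤ m := by have := hlG b0; omega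
      have h6 : supp.card * (m+1) ≤ (k-1) * (m+1) := by
        exact Nat.mul_le_mul_right _ (by omega)
      have hk1 : 1 ≤ k := by
        -- if k = 0 then supp.card < 0 impossible
        omega
      have : k * (m+1) ≤ m + (k-1)*(m+1) := by omega
      have hfin : (k-1)*(m+1) + (m+1) = k * (m+1) := by
        have : (k-1) + 1 = k := by omega
        calc (k-1)*(m+1) + (m+1) = ((k-1)+1) * (m+1) := by ring
        _ = k * (m+1) := by rw [this]
      omega
    -- extend T' to S₀ of size k inside supp
    obtain ⟨S₀, hS₀T', hS₀supp, hS₀card⟩ :=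
      Finset.exists_subsuperset_card_eq hT'supp (n := k - T'.card + T'.card) (by omega) (by omega)
    have hS₀k : S₀.card = k := by rw [hS₀card]; omega
    have hb0S₀ : b0 ∉ S₀ := fun h => (Finset.mem_erase.1 (hS₀supp h)).1 rfl
    have hS₀pos : ∀ c ∈ S₀, 1 ≤ ℓ c := fun c hc =>
      (Finset.mem_filter.1 (Finset.mem_of_mem_erase (hS₀supp hc))).2
    -- new data
    set ℓ' : Fin t → ℕ := fun c => ℓ c - (if c ∈ S₀ then 1 else 0) with hℓ'
    set ι' := {i : ι // i ≠ i₀} with hι'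
    have hcard' : Fintype.card ι' = m := by
      have h2 := Fintype.card_subtype_compl (fun i : ι => i = i₀)
      rw [Fintype.card_subtype_eq, hcard] at h2
      exact h2.trans (by omega)
    have hGrel : ∀ c, G c = (if b0 = c then 1 else 0)
        + (univ.filter (fun i : ι' => β i.1 = c)).card := by
      intro c
      simp only [hG]
      rw [Finset.card_filter, Finset.card_filter,
        ← Finset.add_sum_erase univ (fun i => if β i = c then 1 else 0) (mem_univ i₀),
        Finset.sum_subtype (univ.erase i₀) (p := fun i => i ≠ i₀)
          (by intro x; simp [Finset.mem_erase]) (fun i => if β i = c then 1 else 0)]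
    have hsum' : (∑ c, ℓ' c) = k * m := by
      have hsplit : (∑ c, ℓ' c) + (∑ c, (if c ∈ S₀ then 1 else 0)) = ∑ c, ℓ c := by
        rw [← Finset.sum_add_distrib]
        refine Finset.sum_congr rfl ?_
        intro c _
        by_cases h : c ∈ S₀
        · have := hS₀pos c h; simp [hℓ', h]; omega
        · simp [hℓ', h]
      have hind : (∑ c, (if c ∈ S₀ then 1 else 0)) = k := by
        rw [Finset.sum_ite_mem, Finset.univ_inter, Finset.sum_const, smul_eq_mul, hS₀k, mul_one]
      rw [hsum] at hsplit
      have hms : k * (m+1) = k * m + k := by ring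
      omega
    have hcap' : ∀ c, ℓ' c + (univ.filter (fun i : ι' => β i.1 = c)).card ≤ m := by
      intro c
      have hrel := hGrel c
      have hnotT : c ∉ S₀ → c ≠ b0 → ℓ c + G c ≤ m := by
        intro hcS hcb
        have hnt : c ∉ Tight := by
          intro hcT
          exact hcS (hS₀T' (Finset.mem_erase.2 ⟨hcb, hcT⟩))
        have h1 := hlG c
        have : ℓ c + G c ≠ m + 1 := fun hh => hnt (Finset.mem_filter.2 ⟨mem_univ c, hh⟩)
        omega
      by_cases hbc : b0 = c
      · rw [if_pos hbc] at hrel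
        have h1 := hlG c
        have hcS : c ∉ S₀ := by rw [← hbc]; exact hb0S₀
        simp only [hℓ', if_neg hcS]
        omega
      · rw [if_neg hbc] at hrel
        by_cases hcS : c ∈ S₀
        · have h1 := hlG c
          have hL := hS₀pos c hcS
          simp only [hℓ', if_pos hcS]
          omega
        · have := hnotT hcS (fun h => hbc h.symm)
          simp only [hℓ', if_neg hcS]
          omega
    obtain ⟨S', hS'prop, hS'count⟩ := IH ι' (fun i => β i.1) ℓ' hcard' hsum' hcap'
    set Sf : ι → Finset (Fin t) := fun i => if h : i = i₀ then S₀ else S' ⟨i, h⟩ with hSf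
    have hSf0 : Sf i₀ = S₀ := dif_pos rfl
    have hSfne : ∀ (i : ι) (h : i ≠ i₀), Sf i = S' ⟨i, h⟩ := fun i h => dif_neg h
    refine ⟨Sf, ?_, ?_⟩
    · intro i
      by_cases h : i = i₀
      · subst h; rw [hSf0]; exact ⟨hS₀k, hb0S₀⟩
      · rw [hSfne i h]; exact hS'prop ⟨i, h⟩
    · intro c
      rw [Finset.card_filter,
        ← Finset.add_sum_erase univ (fun i => if c ∈ Sf i then 1 else 0) (mem_univ i₀),
        Finset.sum_subtype (univ.erase i₀) (p := fun i => i ≠ i₀)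
          (by intro x; simp [Finset.mem_erase]) (fun i => if c ∈ Sf i then 1 else 0)]
      have h1 : (∑ i : ι', (if c ∈ Sf i.1 then 1 else 0))
          = ∑ i : ι', (if c ∈ S' i then 1 else 0) := by
        refine Finset.sum_congr rfl ?_
        intro i _
        rw [hSfne i.1 i.2]
      have h2 : (∑ i : ι', (if c ∈ S' i then 1 else 0)) = ℓ' c := by
        rw [← hS'count c, Finset.card_filter]
      rw [h1, h2, hSf0]
      by_cases h : c ∈ S₀
      · have := hS₀pos c h
        simp only [hℓ', if_pos h]
        omega
      · simp only [hℓ', if_neg h]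
        omega

/-- `a ≤ B` from `a*n = k*B`, `k ≤ n`. -/
lemma aux_a_le_B {a n k B : ℕ} (hk : 1 ≤ k) (hkn : k ≤ n) (hab : a * n = k * B) :
    a ≤ B := by
  have h1 : a * k ≤ a * n := Nat.mul_le_mul_left a hkn
  rw [hab] at h1
  have h2 : a * k = k * a := by ring
  rw [h2] at h1
  exact Nat.le_of_mul_le_mul_left h1 (by omega)

/-- `q ≤ X`. -/
lemma aux_q_le_X {a n k B t : ℕ} (ha : 1 ≤ a) (hk : 1 ≤ k) (hkn : k ≤ n) (hB : 1 ≤ B)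
    (hab : a * n = k * B) (ht : k + 2 ≤ t) :
    (k+1)*(k*B+n+1)/t ≤ k*B+n := by
  have hn : k ≤ n := hkn
  have hkB : n ≤ k * B := by nlinarith
  have hX : k + 1 ≤ k*B+n := by nlinarith
  have h1 : (k+1)*(k*B+n+1) ≤ (k+2)*(k*B+n) + (k+2-1) := by nlinarith
  have h2 : (k+1)*(k*B+n+1)/(k+2) ≤ k*B+n :=
    (Nat.div_le_iff_le_mul_add_pred (by omega)).2 h1
  exact le_trans (Nat.div_le_div_left ht (by omega)) h2

/-- capacity via q : `n ≤ (t-1) * q` when `t ≤ N`. -/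
lemma aux_cap_q {a n k B t : ℕ} (ha : 1 ≤ a) (hn : 1 ≤ n) (hk : 1 ≤ k) (hkn : k ≤ n)
    (hB : 1 ≤ B) (hab : a * n = k * B) (ht : k + 2 ≤ t)
    (htN : t ≤ (k+1)*(k*B+n+1)) :
    n ≤ (t-1) * ((k+1)*(k*B+n+1)/t) := by
  set N := (k+1)*(k*B+n+1) with hN
  set q := N / t with hq
  have hq1 : 1 ≤ q := (Nat.one_le_div_iff (by omega)).2 htN
  by_cases htn : n + 1 ≤ t
  · calc n ≤ (t-1) * 1 := by omega
    _ ≤ (t-1)*q := Nat.mul_le_mul_left _ hq1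
  · push_neg at htn
    have htn' : t ≤ n := by omega
    have hkB : n ≤ k * B := by nlinarith
    have hN4 : 4*n + 2 ≤ N := by
      have : 2*(n+n+1) ≤ (k+1)*(k*B+n+1) := by nlinarith
      omega
    have hmod : N % t < t := Nat.mod_lt _ (by omega)
    have hdm : t * q + N % t = N := Nat.div_add_mod N t
    have htq : N - (t-1) ≤ t * q := by omega
    obtain ⟨s, hs⟩ : ∃ s, t = s + 3 := ⟨t - 3, by omega⟩
    obtain ⟨d, hd⟩ : ∃ d, N = t + d := ⟨N - t, by omega⟩
    -- key : t * n ≤ (t-1) * (d+1)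
    have hd1 : 3*n + 3 ≤ d + 1 := by omega
    have hmul : (s+2)*(3*n+3) ≤ (s+2)*(d+1) := Nat.mul_le_mul_left _ hd1
    have key : t * n ≤ (t-1) * (d+1) := by
      rw [hs]
      have : (s+3)*n ≤ (s+2)*(3*n+3) := by nlinarith
      calc (s+3)*n ≤ (s+2)*(3*n+3) := this
      _ ≤ (s+2)*(d+1) := hmul
      _ = (s+3-1)*(d+1) := by norm_num
    have hfin : t * n ≤ t * ((t-1) * q) := by
      calc t * n ≤ (t-1)*(d+1) := key
      _ ≤ (t-1)*(t*q) := Nat.mul_le_mul_left _ (by omega)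
      _ = t * ((t-1)*q) := by ring
    exact Nat.le_of_mul_le_mul_left hfin (by omega)

/-- key capacity at t = k+2 : `n ≤ (k+1) * (margin₀ / a)`. -/
lemma aux_cap_W0 {a n k B : ℕ} (ha : 1 ≤ a) (hn : 1 ≤ n) (hk : 1 ≤ k) (hkn : k ≤ n)
    (hB : 1 ≤ B) (hab : a * n = k * B) :
    n ≤ (k+1) * ((k*B+n+B - (k+1)*(k*B+n+1)/(k+2)) / a) := by
  set X := k*B+n with hX
  set q0 := (k+1)*(X+1)/(k+2) with hq0
  have hq0X : q0 ≤ X := aux_q_le_X ha hk hkn hB hab (le_refl (k+2))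
  set mg := X + B - q0 with hmg
  have hmgB : B ≤ mg := by omega
  have haB : a ≤ B := aux_a_le_B hk hkn hab
  have hW1 : 1 ≤ mg / a := (Nat.one_le_div_iff (by omega)).2 (le_trans haB hmgB)
  have hq0le : (k+2)*q0 ≤ (k+1)*(X+1) := by
    rw [hq0, mul_comm]
    exact Nat.div_mul_le_self _ _
  have hXeq : X = k*B+n := hX
  clear_value mg q0 X
  by_cases hnk : n ≤ k + 1
  · calc n ≤ (k+1) * 1 := by omega
    _ ≤ (k+1) * (mg/a) := Nat.mul_le_mul_left _ hW1
  · push_neg at hnk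
    have hn2 : k + 2 ≤ n := hnk
    -- a * (mg/a) ≥ mg - (a-1)
    have hdm := Nat.div_add_mod mg a
    have hma : mg % a < a := Nat.mod_lt _ (by omega)
    have hgoal : a * n + (k+1)*(a-1) ≤ (k+1) * mg → n ≤ (k+1)*(mg/a) := by
      intro h
      have h1 : a * ((k+1)*(mg/a)) = (k+1)*(a*(mg/a)) := by ring
      have h2 : mg - (a-1) ≤ a * (mg/a) := by omega
      have h3 : (k+1)*(mg - (a-1)) ≤ (k+1)*(a*(mg/a)) := Nat.mul_le_mul_left _ h2
      have h4 : a * n ≤ (k+1)*(mg - (a-1)) := by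
        have hsplit : (k+1)*(mg-(a-1)) + (k+1)*(a-1) = (k+1)*mg := by
          obtain ⟨d, hd⟩ : ∃ d, mg = d + (a-1) := ⟨mg - (a-1), by omega⟩
          rw [hd]
          have hd2 : d + (a-1) - (a-1) = d := by omega
          rw [hd2]
          ring
        omega
      have h5 : a * n ≤ a * ((k+1)*(mg/a)) := by omega
      exact Nat.le_of_mul_le_mul_left h5 (by omega)
    apply hgoal
    -- so (k+2)*mg ≥ (k+2)*(X+B) - (k+1)*(X+1)
    have hmg2 : (k+2)*(X+B) ≤ (k+2)*mg + (k+1)*(X+1) := by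
      have hmgq : mg + q0 = X + B := by omega
      have hexp : (k+2)*(mg+q0) = (k+2)*mg + (k+2)*q0 := by ring
      rw [← hmgq, hexp]
      omega
    -- final: (k+2)*(a*n + (k+1)*(a-1)) ≤ (k+1)*((k+2)*mg)
    have hfin : (k+2)*(a*n + (k+1)*(a-1)) ≤ (k+2)*((k+1)*mg) := by
      obtain ⟨a', ha'⟩ : ∃ a', a = a' + 1 := ⟨a - 1, by omega⟩
      subst ha'
      have han : a' * n + n = k * B := by linarith [hab]
      have ha'kB : (k+2) * a' ≤ k * B := by
        have h0 : a' * (k+2) ≤ a' * n := Nat.mul_le_mul_left _ hn2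
        have h1 : a' * (k+2) = (k+2) * a' := by ring
        omega
      have hXk : k + 1 ≤ X := by
        have : n ≤ k * B := by nlinarith
        omega
      have h6 : (k+1)*((k+2)*(X+B)) ≤ (k+1)*((k+2)*mg) + (k+1)*((k+1)*(X+1)) := by
        have h6' := Nat.mul_le_mul_left (k+1) hmg2
        have hdist : (k+1)*((k+2)*mg + (k+1)*(X+1))
            = (k+1)*((k+2)*mg) + (k+1)*((k+1)*(X+1)) := by ring
        omega
      simp only [Nat.add_sub_cancel]
      have e1 : (a'+1)*n = k*B := by
        have : (a'+1)*n = a'*n + n := by ring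
        omega
      have e3 : (k+2)*((a'+1)*n + (k+1)*a') = (k+2)*(k*B) + (k+1)*((k+2)*a') := by
        rw [e1]; ring
      have e2 : (k+1)*((k+2)*a') ≤ (k+1)*(k*B) := Nat.mul_le_mul_left _ ha'kB
      have e4 : (k+2)*(k*B) + (k+1)*(k*B) + (k+1)*((k+1)*(X+1)) ≤ (k+1)*((k+2)*(X+B)) := by
        subst hXeq
        obtain ⟨m, hm⟩ : ∃ m, n = k+1+m := ⟨n-(k+1), by omega⟩
        subst hm
        have hid : (k+1)*((k+2)*(k*B+(k+1+m)+B))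
            = (k+2)*(k*B) + (k+1)*(k*B) + (k+1)*((k+1)*(k*B+(k+1+m)+1))
              + ((k+2)*B + (k+1)*m) := by ring
        omega
      calc (k+2)*((a'+1)*n + (k+1)*a') = (k+2)*(k*B) + (k+1)*((k+2)*a') := e3
      _ ≤ (k+2)*(k*B) + (k+1)*(k*B) := by omega
      _ ≤ (k+1)*((k+2)*mg) := by omega
      _ = (k+2)*((k+1)*mg) := by ring
    have := Nat.le_of_mul_le_mul_left
      (by linarith [hfin] : (k+2)*(a*n + (k+1)*(a-1)) ≤ (k+2)*((k+1)*mg)) (show 0 < k+2 by omega)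
    omega

open Finset

/-- copy index space -/
abbrev CopIdx (a n B : ℕ) : Type := Fin (B+1) ⊕ (Fin n × Fin (a+1))

lemma glsPar_zero (n B : ℕ) (a : Fin n → ℕ) : glsPar n B a 0 = B := by
  simp [glsPar]

lemma glsPar_succ (n B : ℕ) (a : Fin n → ℕ) (j : Fin n) : glsPar n B a j.succ = a j := by
  simp [glsPar]

def copMap (a n B : ℕ) : ∀ i : Fin (n+1), Fin (glsPar n B (fun _ => a) i + 1) → CopIdx a n B :=
  Fin.cases (motive := fun i => Fin (glsPar n B (fun _ => a) i + 1) → CopIdx a n B)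
    (fun x => Sum.inl (Fin.cast (by rw [glsPar_zero]) x))
    (fun j x => Sum.inr (j, Fin.cast (by rw [glsPar_succ]) x))

lemma copMap_zero (a n B : ℕ) (x : Fin (glsPar n B (fun _ => a) 0 + 1)) :
    copMap a n B 0 x = Sum.inl (Fin.cast (by rw [glsPar_zero]) x) := by
  unfold copMap
  rw [Fin.cases_zero]

lemma copMap_succ (a n B : ℕ) (j : Fin n) (x : Fin (glsPar n B (fun _ => a) j.succ + 1)) :
    copMap a n B j.succ x = Sum.inr (j, Fin.cast (by rw [glsPar_succ]) x) := by
  unfold copMap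
  rw [Fin.cases_succ]

lemma sum_emb_indicator {t k : ℕ} (s : Finset (Fin t)) (h : s.card = k) (c : Fin t) :
    (∑ p : Fin k, if s.orderEmbOfFin h p = c then 1 else 0) = if c ∈ s then 1 else 0 := by
  rw [← Finset.card_filter]
  by_cases hc : c ∈ s
  · rw [if_pos hc]
    have hrange : ∃ p, s.orderEmbOfFin h p = c := by
      have h2 := Finset.range_orderEmbOfFin s h
      have : c ∈ Set.range (s.orderEmbOfFin h) := by rw [h2]; exact hc
      exact this
    obtain ⟨p₀, hp₀⟩ := hrange
    rw [Finset.card_eq_one]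
    refine ⟨p₀, ?_⟩
    ext p
    simp only [Finset.mem_filter, Finset.mem_univ, true_and, Finset.mem_singleton]
    constructor
    · intro hp; exact (s.orderEmbOfFin h).injective (hp.trans hp₀.symm)
    · rintro rfl; exact hp₀
  · rw [if_neg hc, Finset.card_eq_zero, Finset.filter_eq_empty_iff]
    intro p _
    intro hp
    exact hc (hp ▸ Finset.orderEmbOfFin_mem s h p)

/-- The abstract construction: from per-copy column sets with the right
cardinalities, avoidances, and counts, build an equitable coloring. -/
lemma build_coloring (a n k B t q : ℕ) (ht : 0 < t) (κ : Fin n → Fin t) (e : Fin t → ℕ)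
    (S : CopIdx a n B → Finset (Fin t))
    (hScard : ∀ i, (S i).card = k)
    (hSβ1 : ∀ x : Fin (B+1), ⟨0, ht⟩ ∉ S (Sum.inl x))
    (hSβ2 : ∀ j x, κ j ∉ S (Sum.inr (j, x)))
    (hκ0 : ∀ j, (κ j : ℕ) ≠ 0)
    (hcount : ∀ c : Fin t, (univ.filter (fun i => c ∈ S i)).card
        = (q + e c) - ((univ.filter (fun j : Fin n => κ j = c)).card
            + if (c : ℕ) = 0 then 1 else 0))
    (hle : ∀ c : Fin t, (univ.filter (fun j : Fin n => κ j = c)).card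
        + (if (c : ℕ) = 0 then 1 else 0) ≤ q + e c)
    (he1 : ∀ c, e c ≤ 1) :
    ∃ c : GLSV n k B (fun _ => a) → Fin t,
      IsEquitableColoring (GLSGraph n k B (fun _ => a)) c := by
  classical
  set zero : Fin t := ⟨0, ht⟩ with hzero
  set ycol : Fin (n+1) → Fin t := Fin.cases zero κ with hycol
  set col : GLSV n k B (fun _ => a) → Fin t := fun v =>
    Option.elim v.2 (ycol v.1)
      (fun xp => (S (copMap a n B v.1 xp.1)).orderEmbOfFin (hScard _) xp.2) with hcol
  have hcol_none : ∀ i, col ⟨i, none⟩ = ycol i := fun i => rfl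
  have hcol_some : ∀ i x p, col ⟨i, some (x, p)⟩
      = (S (copMap a n B i x)).orderEmbOfFin (hScard _) p := fun i x p => rfl
  have hycol_avoid : ∀ i x, ycol i ∉ S (copMap a n B i x) := by
    intro i
    induction i using Fin.cases with
    | zero =>
      intro x
      rw [copMap_zero]
      rw [show ycol 0 = zero from Fin.cases_zero]
      exact hSβ1 _
    | succ j =>
      intro x
      rw [copMap_succ]
      rw [show ycol j.succ = κ j from Fin.cases_succ j]
      exact hSβ2 _ _
  have hκzero : ∀ j, κ j ≠ zero := by
    intro j hj
    exact hκ0 j (by rw [hj])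
  -- core properness claim
  have core : ∀ u v : GLSV n k B (fun _ => a), u ≠ v →
      ((u.1 = v.1 ∧ (u.2 = none ∨ v.2 = none ∨
        ∃ c : ℕ, u.2.map (fun p => (p.1 : ℕ)) = some c ∧
                 v.2.map (fun p => (p.1 : ℕ)) = some c)) ∨
      (u.2 = none ∧ v.2 = none ∧ (u.1 = 0 ∨ v.1 = 0))) → col u ≠ col v := by
    rintro ⟨i, uo⟩ ⟨i', vo⟩ hne (⟨hii, hor⟩ | ⟨hu0, hv0, h00⟩)
    · -- same flower
      dsimp only at hii
      subst hii
      match uo, vo with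
      | none, none => exact absurd rfl hne
      | none, some (x, p) =>
        rw [hcol_none, hcol_some]
        intro hEq
        exact hycol_avoid i x (hEq ▸ Finset.orderEmbOfFin_mem _ _ _)
      | some (x, p), none =>
        rw [hcol_none, hcol_some]
        intro hEq
        exact hycol_avoid i x (hEq.symm ▸ Finset.orderEmbOfFin_mem _ _ _)
      | some (x, p), some (x', p') =>
        rcases hor with h | h | ⟨cc, hc1, hc2⟩
        · exact absurd h (by simp)
        · exact absurd h (by simp)
        · simp only [Option.map_some] at hc1 hc2
          have hxx : (x : ℕ) = (x' : ℕ) := by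
            have e1 : (x : ℕ) = cc := by injection hc1
            have e2 : (x' : ℕ) = cc := by injection hc2
            omega
          have hxx' : x = x' := Fin.ext hxx
          subst hxx'
          have hpp : p ≠ p' := by
            intro hpp
            exact hne (by rw [hpp])
          rw [hcol_some, hcol_some]
          intro hEq
          exact hpp ((Finset.orderEmbOfFin _ _).injective hEq)
    · -- two y's
      dsimp only at hu0 hv0 h00
      subst hu0; subst hv0
      have hii : i ≠ i' := by
        intro h
        subst h
        exact hne rfl
      rw [hcol_none, hcol_none]
      rcases h00 with h0 | h0
      · subst h0
        obtain ⟨j, rfl⟩ := Fin.eq_succ_of_ne_zero (Ne.symm hii)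
        have e1 : ycol 0 = zero := Fin.cases_zero
        have e2 : ycol j.succ = κ j := Fin.cases_succ j
        rw [e1, e2]
        exact fun h => hκzero j h.symm
      · subst h0
        obtain ⟨j, rfl⟩ := Fin.eq_succ_of_ne_zero hii
        have e1 : ycol 0 = zero := Fin.cases_zero
        have e2 : ycol j.succ = κ j := Fin.cases_succ j
        rw [e1, e2]
        exact hκzero j
  have hproper : IsProperColoring (GLSGraph n k B (fun _ => a)) col := by
    intro u v hadj
    rw [GLSGraph, SimpleGraph.fromRel_adj] at hadj
    obtain ⟨hne, hrel | hrel⟩ := hadj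
    · exact core u v hne hrel
    · exact (core v u (Ne.symm hne) hrel).symm
  -- size computation
  have hsize : ∀ c0 : Fin t,
      (univ.filter (fun v : GLSV n k B (fun _ => a) => col v = c0)).card = q + e c0 := by
    intro c0
    rw [Finset.card_filter]
    rw [← Finset.univ_sigma_univ, Finset.sum_sigma]
    have hterm : ∀ i : Fin (n+1),
        (∑ o : Option (Fin (glsPar n B (fun _ => a) i + 1) × Fin k),
          if col ⟨i, o⟩ = c0 then 1 else 0)
        = (if ycol i = c0 then 1 else 0)
          + ∑ x : Fin (glsPar n B (fun _ => a) i + 1),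
              (if c0 ∈ S (copMap a n B i x) then 1 else 0) := by
      intro i
      rw [Fintype.sum_option]
      congr 1
      rw [Fintype.sum_prod_type]
      refine Finset.sum_congr rfl ?_
      intro x _
      rw [← sum_emb_indicator (S (copMap a n B i x)) (hScard _) c0]
      rfl
    calc (∑ i : Fin (n+1), ∑ o : Option (Fin (glsPar n B (fun _ => a) i + 1) × Fin k),
            if col ⟨i, o⟩ = c0 then 1 else 0)
        = ∑ i : Fin (n+1), ((if ycol i = c0 then 1 else 0)
            + ∑ x : Fin (glsPar n B (fun _ => a) i + 1),
                (if c0 ∈ S (copMap a n B i x) then 1 else 0)) := by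
          exact Finset.sum_congr rfl (fun i _ => hterm i)
      _ = q + e c0 := by
          rw [Fin.sum_univ_succ]
          have E1 : (if ycol 0 = c0 then 1 else 0) = (if (c0:ℕ) = 0 then 1 else 0) := by
            rw [show ycol 0 = zero from Fin.cases_zero]
            refine if_congr ?_ rfl rfl
            rw [hzero, Fin.ext_iff]
            exact eq_comm
          have E2 : (∑ x : Fin (glsPar n B (fun _ => a) 0 + 1),
                if c0 ∈ S (copMap a n B 0 x) then 1 else 0)
              = ∑ x : Fin (B+1), if c0 ∈ S (Sum.inl x) then 1 else 0 := by
            refine Fintype.sum_equiv (finCongr (by rw [glsPar_zero] :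
              glsPar n B (fun _ => a) 0 + 1 = B + 1)) _ _ ?_
            intro x
            rw [copMap_zero]
            rfl
          have E3 : (∑ j : Fin n, ((if ycol j.succ = c0 then 1 else 0)
                + ∑ x : Fin (glsPar n B (fun _ => a) j.succ + 1),
                    if c0 ∈ S (copMap a n B j.succ x) then 1 else 0))
              = (univ.filter (fun j : Fin n => κ j = c0)).card
                + ∑ j : Fin n, ∑ x : Fin (a+1),
                    if c0 ∈ S (Sum.inr (j,x)) then 1 else 0 := by
            rw [Finset.sum_add_distrib]
            have h1 : (∑ j : Fin n, if ycol j.succ = c0 then 1 else 0)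
                = (univ.filter (fun j : Fin n => κ j = c0)).card := by
              rw [Finset.card_filter]
              exact Finset.sum_congr rfl fun j _ => by
                rw [show ycol j.succ = κ j from Fin.cases_succ j]
            have h2 : (∑ j : Fin n, ∑ x : Fin (glsPar n B (fun _ => a) j.succ + 1),
                  if c0 ∈ S (copMap a n B j.succ x) then 1 else 0)
                = ∑ j : Fin n, ∑ x : Fin (a+1),
                    if c0 ∈ S (Sum.inr (j,x)) then 1 else 0 := by
              refine Finset.sum_congr rfl fun j _ => ?_
              refine Fintype.sum_equiv (finCongr (by rw [glsPar_succ] :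
                glsPar n B (fun _ => a) j.succ + 1 = a + 1)) _ _ ?_
              intro x
              rw [copMap_succ]
              rfl
            rw [h1, h2]
          have E4 : (∑ x : Fin (B+1), if c0 ∈ S (Sum.inl x) then 1 else 0)
              + (∑ j : Fin n, ∑ x : Fin (a+1), if c0 ∈ S (Sum.inr (j,x)) then 1 else 0)
              = (univ.filter (fun i => c0 ∈ S i)).card := by
            rw [Finset.card_filter, Fintype.sum_sum_type]
            congr 1
            rw [Fintype.sum_prod_type]
          rw [E1, E2, E3]
          have hc := hcount c0
          have hl := hle c0
          omega
  -- ncard version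
  have hncard : ∀ c0 : Fin t, {v | col v = c0}.ncard = q + e c0 := by
    intro c0
    rw [← hsize c0]
    rw [Set.ncard_eq_toFinset_card', Set.toFinset_setOf]
  refine ⟨col, hproper, ?_⟩
  intro i j
  rw [hncard i, hncard j]
  have := he1 i
  have := he1 j
  omega

/-- Main construction for `k+2 ≤ t ≤ N`. -/
lemma main_construct (a n k B t : ℕ) (ha : 1 ≤ a) (hn : 1 ≤ n)
    (hk : 1 ≤ k) (hkn : k ≤ n) (hB : 1 ≤ B) (hab : a * n = k * B)
    (ht : k + 2 ≤ t) (htN : t ≤ (k+1)*(k*B+n+1)) :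
    ∃ c : GLSV n k B (fun _ => a) → Fin t,
      IsEquitableColoring (GLSGraph n k B (fun _ => a)) c := by
  classical
  have ht0 : 0 < t := by omega
  obtain ⟨N, hN⟩ : ∃ N, N = (k+1)*(k*B+n+1) := ⟨_, rfl⟩
  rw [← hN] at htN
  obtain ⟨q, hq⟩ : ∃ q, q = N / t := ⟨_, rfl⟩
  obtain ⟨r, hr⟩ : ∃ r, r = N % t := ⟨_, rfl⟩
  have hdm : t * q + r = N := by rw [hq, hr]; exact Nat.div_add_mod N t
  have hrt : r < t := by rw [hr]; exact Nat.mod_lt _ ht0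
  have hq1 : 1 ≤ q := by rw [hq]; exact (Nat.one_le_div_iff ht0).2 htN
  have hqX : q ≤ k*B+n := by
    rw [hq, hN]
    exact aux_q_le_X ha hk hkn hB hab ht
  have haB : a ≤ B := aux_a_le_B hk hkn hab
  obtain ⟨W, hW⟩ : ∃ W, W = (k*B+n + B - q) / a := ⟨_, rfl⟩
  have hmgB : B ≤ k*B+n + B - q := by omega
  have hW1 : 1 ≤ W := by
    rw [hW]; exact (Nat.one_le_div_iff (by omega)).2 (le_trans haB hmgB)
  obtain ⟨Wq, hWq⟩ : ∃ Wq, Wq = min W q := ⟨_, rfl⟩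
  have hWq1 : 1 ≤ Wq := by rw [hWq]; exact le_min hW1 hq1
  have hWqW : Wq ≤ W := by rw [hWq]; exact min_le_left _ _
  have hWqq : Wq ≤ q := by rw [hWq]; exact min_le_right _ _
  have hcapn : n ≤ (t-1) * Wq := by
    rcases le_total W q with h | h
    · rw [hWq, min_eq_left h]
      have hqq0 : q ≤ (k+1)*(k*B+n+1)/(k+2) := by
        rw [hq, hN]
        exact Nat.div_le_div_left ht (by omega)
      have hWW : (k*B+n + B - (k+1)*(k*B+n+1)/(k+2)) / a ≤ W := by
        rw [hW]
        apply Nat.div_le_div_right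
        omega
      have h0 := aux_cap_W0 (a := a) (n := n) (k := k) (B := B) ha hn hk hkn hB hab
      calc n ≤ (k+1) * ((k*B+n+B - (k+1)*(k*B+n+1)/(k+2)) / a) := h0
      _ ≤ (t-1) * W := Nat.mul_le_mul (by omega) hWW
    · rw [hWq, min_eq_right h]
      have h0 := aux_cap_q ha hn hk hkn hB hab ht (by rw [hN] at htN; exact htN)
      rw [← hN, ← hq] at h0
      exact h0
  -- the y-columns
  set κ : Fin n → Fin t := fun j => ⟨1 + (j : ℕ)/Wq, by
    have hj : (j : ℕ) < (t-1) * Wq := lt_of_lt_of_le j.2 hcapn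
    have hdl : (j : ℕ)/Wq < t - 1 := (Nat.div_lt_iff_lt_mul (by omega)).2 hj
    generalize (j : ℕ)/Wq = d at hdl
    omega⟩ with hκ
  have hκ0 : ∀ j, (κ j : ℕ) ≠ 0 := by
    intro j
    show 1 + (j : ℕ)/Wq ≠ 0
    generalize (j : ℕ)/Wq = d
    omega
  set u : Fin t → ℕ := fun c => (univ.filter (fun j : Fin n => κ j = c)).card with hu
  set e : Fin t → ℕ := fun c => if (c : ℕ) < r then 1 else 0 with he
  have he1 : ∀ c, e c ≤ 1 := by
    intro c
    simp only [he]
    split <;> omega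
  have hu0 : u ⟨0, ht0⟩ = 0 := by
    simp only [hu, Finset.card_eq_zero, Finset.filter_eq_empty_iff]
    intro j _
    intro hj
    exact hκ0 j (by rw [hj])
  have huW : ∀ c, u c ≤ Wq := by
    intro c
    simp only [hu]
    have hsub : (univ.filter (fun j : Fin n => κ j = c))
        ⊆ (univ.filter (fun j : Fin n => (j : ℕ)/Wq = (c : ℕ) - 1)) := by
      intro j hj
      simp only [Finset.mem_filter, Finset.mem_univ, true_and] at hj ⊢
      have hvj : 1 + (j : ℕ)/Wq = (c : ℕ) := by rw [← hj]
      generalize (j : ℕ)/Wq = d at hvj ⊢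
      omega
    refine le_trans (Finset.card_le_card hsub) ?_
    refine le_trans (Finset.card_le_card_of_injOn (fun j => (j : ℕ))
      (t := Finset.Ico (Wq * ((c:ℕ)-1)) (Wq * ((c:ℕ)-1) + Wq)) ?_ ?_) ?_
    · intro j hj
      simp only [Finset.mem_coe, Finset.mem_filter, Finset.mem_univ, true_and] at hj
      have h1 := Nat.div_add_mod (j : ℕ) Wq
      have h2 : (j : ℕ) % Wq < Wq := Nat.mod_lt _ (by omega)
      rw [hj] at h1
      simp only [Finset.mem_coe, Finset.mem_Ico]
      omega
    · intro x _ y _ hxy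
      exact Fin.ext hxy
    · rw [Nat.card_Ico]
      omega
  -- sums
  have husum : (∑ c, u c) = n := by
    have hfib := Finset.card_eq_sum_card_fiberwise
      (f := κ) (s := univ) (t := univ) (fun x _ => mem_univ _)
    rw [Finset.card_univ, Fintype.card_fin] at hfib
    simp only [hu]
    exact hfib.symm
  have hesum : (∑ c, e c) = r := by
    simp only [he]
    rw [Fin.sum_univ_eq_sum_range (fun i => if i < r then 1 else 0) t]
    rw [← Finset.card_filter]
    have hflt : (Finset.range t).filter (fun i => i < r) = Finset.range r := by
      ext x
      simp only [Finset.mem_filter, Finset.mem_range]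
      omega
    rw [hflt, Finset.card_range]
  -- the loads
  set ℓf : Fin t → ℕ :=
    fun c => (q + e c) - (u c + if (c : ℕ) = 0 then 1 else 0) with hℓf
  have hle_pt : ∀ c : Fin t, u c + (if (c:ℕ) = 0 then 1 else 0) ≤ q + e c := by
    intro c
    by_cases hc0 : (c : ℕ) = 0
    · have hceq : c = ⟨0, ht0⟩ := Fin.ext hc0
      rw [if_pos hc0, hceq, hu0]
      omega
    · rw [if_neg hc0]
      have := huW c
      omega
  have hpt : ∀ c : Fin t, ℓf c + (u c + if (c:ℕ) = 0 then 1 else 0) = q + e c := by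
    intro c
    have := hle_pt c
    simp only [hℓf]
    omega
  have hM' : n*(a+1) = k*B + n := by
    have h1 : n*(a+1) = a*n + n := by ring
    rw [hab] at h1
    exact h1
  have hsuml : (∑ c, ℓf c) = k * ((B+1) + n*(a+1)) := by
    have hsplit : (∑ c, ℓf c) + (∑ c, (u c + if (c:ℕ) = 0 then 1 else 0))
        = ∑ c, (q + e c) := by
      rw [← Finset.sum_add_distrib]
      exact Finset.sum_congr rfl (fun c _ => hpt c)
    have hsum1 : (∑ c : Fin t, (q + e c)) = t * q + r := by
      rw [Finset.sum_add_distrib, hesum, Finset.sum_const, Finset.card_univ,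
        Fintype.card_fin, smul_eq_mul]
    have hsum2 : (∑ c : Fin t, (u c + if (c:ℕ) = 0 then 1 else 0)) = n + 1 := by
      rw [Finset.sum_add_distrib, husum]
      have hone : (∑ c : Fin t, if (c:ℕ) = 0 then 1 else 0) = 1 := by
        rw [Fin.sum_univ_eq_sum_range (fun i => if i = 0 then 1 else 0) t]
        rw [← Finset.card_filter]
        have : (Finset.range t).filter (fun i => i = 0) = {0} := by
          ext x
          simp only [Finset.mem_filter, Finset.mem_range, Finset.mem_singleton]
          omega
        rw [this, Finset.card_singleton]
      rw [hone]
    have hNk : N = k * ((B+1) + n*(a+1)) + n + 1 := by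
      rw [hN, hM']
      ring
    rw [hsum1, hsum2] at hsplit
    omega
  -- copies and forbidden columns
  set β : CopIdx a n B → Fin t :=
    Sum.elim (fun _ => (⟨0, ht0⟩ : Fin t)) (fun p => κ p.1) with hβ
  have hcardι : Fintype.card (CopIdx a n B) = (B+1) + n*(a+1) := by
    simp [CopIdx]
  have hGcount : ∀ c : Fin t, (univ.filter (fun i : CopIdx a n B => β i = c)).card
      = (if c = ⟨0, ht0⟩ then B+1 else 0) + (a+1) * u c := by
    intro c
    rw [Finset.card_filter, Fintype.sum_sum_type]
    congr 1
    · simp only [hβ, Sum.elim_inl]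
      by_cases hc : c = ⟨0, ht0⟩
      · rw [if_pos hc, hc]
        simp
      · rw [if_neg hc]
        have hne : ((⟨0, ht0⟩ : Fin t) = c) ↔ False := by
          simp only [iff_false]
          exact fun h => hc h.symm
        simp [hne]
    · rw [Fintype.sum_prod_type]
      simp only [hβ, Sum.elim_inr]
      simp only [hu]
      rw [Finset.card_filter, Finset.mul_sum]
      refine Finset.sum_congr rfl fun j _ => ?_
      rw [Finset.sum_const, Finset.card_univ, Fintype.card_fin, smul_eq_mul]
  have hcaps : ∀ c : Fin t, ℓf c + (univ.filter (fun i : CopIdx a n B => β i = c)).card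
      ≤ (B+1) + n*(a+1) := by
    intro c
    rw [hGcount c]
    by_cases hc : c = ⟨0, ht0⟩
    · rw [if_pos hc]
      have hu0' : u c = 0 := by rw [hc]; exact hu0
      have hc0 : (c : ℕ) = 0 := by rw [hc]
      have hptc := hpt c
      rw [if_pos hc0, hu0'] at hptc
      have he1' := he1 c
      rw [hu0']
      omega
    · rw [if_neg hc]
      have hc0 : (c : ℕ) ≠ 0 := fun h => hc (Fin.ext h)
      have hptc := hpt c
      rw [if_neg hc0] at hptc
      have he1' := he1 c
      have h2 : a * u c ≤ a * W := Nat.mul_le_mul_left a (le_trans (huW c) hWqW)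
      have h3 : a * W ≤ k*B+n+B - q := by
        rw [hW, mul_comm]
        exact Nat.div_mul_le_self _ _
      have h4 : (a+1) * u c = a * u c + u c := by ring
      omega
  obtain ⟨S, hSall, hScount⟩ := realize_loads ((B+1) + n*(a+1)) (CopIdx a n B)
    β ℓf hcardι hsuml hcaps
  refine build_coloring a n k B t q ht0 κ e S (fun i => (hSall i).1) ?_ ?_ hκ0 ?_ ?_ he1
  · intro x
    exact (hSall (Sum.inl x)).2
  · intro j x
    exact (hSall (Sum.inr (j, x))).2
  · intro c
    have := hScount c
    simp only [hℓf, hu] at this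
    exact this
  · intro c
    have := hle_pt c
    simp only [hu] at this
    exact this

lemma card_GLSV (a n k B : ℕ) (hab : a * n = k * B) :
    Fintype.card (GLSV n k B (fun _ => a)) = (k+1)*(k*B+n+1) := by
  rw [Fintype.card_sigma, Fin.sum_univ_succ]
  have h0 : Fintype.card (Option (Fin (glsPar n B (fun _ => a) 0 + 1) × Fin k))
      = (B+1)*k + 1 := by
    rw [Fintype.card_option, Fintype.card_prod, Fintype.card_fin, Fintype.card_fin,
      glsPar_zero]
  have hs : ∀ j : Fin n,
      Fintype.card (Option (Fin (glsPar n B (fun _ => a) j.succ + 1) × Fin k))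
      = (a+1)*k + 1 := by
    intro j
    rw [Fintype.card_option, Fintype.card_prod, Fintype.card_fin, Fintype.card_fin,
      glsPar_succ]
  rw [h0]
  have hsum : (∑ j : Fin n,
      Fintype.card (Option (Fin (glsPar n B (fun _ => a) j.succ + 1) × Fin k)))
      = n * ((a+1)*k + 1) := by
    rw [Finset.sum_congr rfl (fun j _ => hs j), Finset.sum_const, Finset.card_univ,
      Fintype.card_fin, smul_eq_mul]
  rw [hsum]
  have hkey : n * ((a+1)*k) = k*B*k + n*k := by
    have h1 : n * ((a+1)*k) = (a*n)*k + n*k := by ring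
    rw [hab] at h1
    exact h1
  nlinarith [hkey]

lemma big_t (a n k B t : ℕ) (hab : a * n = k * B)
    (htN : (k+1)*(k*B+n+1) ≤ t) :
    ∃ c : GLSV n k B (fun _ => a) → Fin t,
      IsEquitableColoring (GLSGraph n k B (fun _ => a)) c := by
  classical
  have hcard : Fintype.card (GLSV n k B (fun _ => a)) ≤ t := by
    rw [card_GLSV a n k B hab]
    exact htN
  set f := Fintype.equivFin (GLSV n k B (fun _ => a)) with hf
  set col : GLSV n k B (fun _ => a) → Fin t := fun v => Fin.castLE hcard (f v) with hcol
  have hinj : Function.Injective col := by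
    intro u v huv
    simp only [hcol] at huv
    exact f.injective (Fin.castLE_injective hcard huv)
  have hsub : ∀ i : Fin t, {v | col v = i}.ncard ≤ 1 := by
    intro i
    have hss : {v | col v = i}.Subsingleton := by
      intro u hu v hv
      exact hinj (hu.trans hv.symm)
    rcases hss.eq_empty_or_singleton with h | ⟨x, h⟩
    · rw [h]; simp
    · rw [h, Set.ncard_singleton]
  refine ⟨col, ?_, ?_⟩
  · intro u v hadj
    exact fun h => (SimpleGraph.Adj.ne hadj) (hinj h)
  · intro i j
    have := hsub i
    omega


theorem gls_uniform_equitable_spectrum (a n k B : ℕ) (ha : 1 ≤ a) (hn : 1 ≤ n)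
    (hk : 1 ≤ k) (hkn : k ≤ n) (hB : 1 ≤ B) (hab : a * n = k * B) :
    (∀ t : ℕ, k + 2 ≤ t →
      ∃ c : GLSV n k B (fun _ => a) → Fin t,
        IsEquitableColoring (GLSGraph n k B (fun _ => a)) c) ∧
    eqChromNum (GLSGraph n k B (fun _ => a)) ≤ k + 2 := by
  have hall : ∀ t : ℕ, k + 2 ≤ t →
      ∃ c : GLSV n k B (fun _ => a) → Fin t,
        IsEquitableColoring (GLSGraph n k B (fun _ => a)) c := by
    intro t ht
    by_cases htN : t ≤ (k+1)*(k*B+n+1)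
    · exact main_construct a n k B t ha hn hk hkn hB hab ht htN
    · exact big_t a n k B t hab (by omega)
  refine ⟨hall, ?_⟩
  apply Nat.sInf_le
  have hN2 : k + 2 ≤ (k+1)*(k*B+n+1) := by
    have h1 : k*1 ≤ k*B := Nat.mul_le_mul_left k hB
    have h3 := Nat.mul_le_mul_right (k*B+n+1) (show 1 ≤ k+1 by omega)
    omega
  exact hall (k+2) (le_refl _)

end BlockGraphPaper
end
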